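/- arXiv:2306.02304 — 3 statements merged into one kernel-verified Lean document; each statement's English description precedes it below -/
import Mathlib

section
/- For every real T ≥ 1, the Lebesgue measure of Ω_T := {(x,y) ∈ ℝ^m × ℝⁿ : 1 ≤ ‖y‖ < T and |xᵢ| < ϑᵢ‖y‖^{-wᵢ} for i = 1,…,m} equals 2^m·ϑ₁⋯ϑ_m·ω_n·log T. -/
open MeasureTheory Filter Real Set Pointwise

section Aux
variable {n : ℕ} (nrm : (Fin n → ℝ) → ℝ)
  (hnrm0 : ∀ x, nrm x = 0 ↔ x = 0)
  (hnrm_smul : ∀ (c : ℝ) x, nrm (c • x) = |c| * nrm x)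
  (hnrm_add : ∀ x y, nrm (x + y) ≤ nrm x + nrm y)

include hnrm0 hnrm_smul hnrm_add in
theorem aux_nrm_nonneg (x : Fin n → ℝ) : 0 ≤ nrm x := by
  have h0 : nrm 0 = 0 := (hnrm0 0).mpr rfl
  have h1 : nrm (-x) = nrm x := by simpa using hnrm_smul (-1) x
  have h2 := hnrm_add x (-x)
  rw [add_neg_cancel, h0, h1] at h2
  linarith

include hnrm0 hnrm_add in
theorem aux_nrm_sum_le {ι : Type*} (s : Finset ι) (f : ι → Fin n → ℝ) :
    nrm (∑ i ∈ s, f i) ≤ ∑ i ∈ s, nrm (f i) := by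
  classical
  induction s using Finset.induction with
  | empty => simp [(hnrm0 0).mpr rfl]
  | @insert a s h ih =>
    rw [Finset.sum_insert h, Finset.sum_insert h]
    exact (hnrm_add _ _).trans (by linarith)

include hnrm0 hnrm_smul hnrm_add in
theorem aux_nrm_sub_abs_le (x y : Fin n → ℝ) : |nrm x - nrm y| ≤ nrm (x - y) := by
  have hne : nrm (y - x) = nrm (x - y) := by
    have h := hnrm_smul (-1) (x - y)
    simp only [neg_one_smul, abs_neg, abs_one, one_mul, neg_sub] at h
    exact h
  have h1 : nrm x ≤ nrm (x - y) + nrm y := by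
    have := hnrm_add (x - y) y; simpa using this
  have h2 : nrm y ≤ nrm (x - y) + nrm x := by
    have := hnrm_add (y - x) x; rw [hne] at this; simpa using this
  rw [abs_sub_le_iff]; constructor <;> linarith

include hnrm0 hnrm_smul hnrm_add in
theorem aux_nrm_le_const : ∀ z : Fin n → ℝ, nrm z ≤ (∑ i, nrm (Pi.single i (1:ℝ))) * ‖z‖ := by
  intro z
  have hz : z = ∑ i, (z i) • (Pi.single i (1:ℝ) : Fin n → ℝ) := by
    ext j; simp [Pi.single_apply]
  calc nrm z ≤ ∑ i, nrm ((z i) • (Pi.single i (1:ℝ) : Fin n → ℝ)) := by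
        nth_rewrite 1 [hz]; exact aux_nrm_sum_le nrm hnrm0 hnrm_add _ _
    _ ≤ ∑ i, nrm (Pi.single i (1:ℝ)) * ‖z‖ := by
        apply Finset.sum_le_sum
        intro i _
        rw [hnrm_smul, mul_comm (nrm _)]
        apply mul_le_mul_of_nonneg_right _ (aux_nrm_nonneg nrm hnrm0 hnrm_smul hnrm_add _)
        exact norm_le_pi_norm z i
    _ = (∑ i, nrm (Pi.single i (1:ℝ))) * ‖z‖ := by rw [Finset.sum_mul]

include hnrm0 hnrm_smul hnrm_add in
theorem aux_nrm_continuous : Continuous nrm := by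
  set C := ∑ i, nrm (Pi.single i (1:ℝ)) with hC
  have : LipschitzWith (Real.toNNReal C) nrm := by
    apply LipschitzWith.of_dist_le_mul
    intro x y
    rw [Real.dist_eq, dist_eq_norm]
    calc |nrm x - nrm y| ≤ nrm (x - y) := aux_nrm_sub_abs_le nrm hnrm0 hnrm_smul hnrm_add x y
      _ ≤ C * ‖x - y‖ := aux_nrm_le_const nrm hnrm0 hnrm_smul hnrm_add _
      _ ≤ (Real.toNNReal C) * ‖x - y‖ := by
          apply mul_le_mul_of_nonneg_right (Real.le_coe_toNNReal C) (norm_nonneg _)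
  exact this.continuous

include hnrm0 hnrm_smul hnrm_add in
theorem aux_nrm_lower (hn : 0 < n) : ∃ c : ℝ, 0 < c ∧ ∀ z, c * ‖z‖ ≤ nrm z := by
  have hcont := aux_nrm_continuous nrm hnrm0 hnrm_smul hnrm_add
  have hnonneg := aux_nrm_nonneg nrm hnrm0 hnrm_smul hnrm_add
  have : Nontrivial (Fin n → ℝ) := by
    refine ⟨⟨0, Pi.single ⟨0, hn⟩ 1, fun h => ?_⟩⟩
    have := congrFun h ⟨0, hn⟩
    simp at this
  have hne : (Metric.sphere (0 : Fin n → ℝ) 1).Nonempty :=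
    NormedSpace.sphere_nonempty.mpr zero_le_one
  obtain ⟨z0, hz0, hmin⟩ := (isCompact_sphere (0 : Fin n → ℝ) 1).exists_isMinOn hne
    hcont.continuousOn
  have hz0ne : z0 ≠ 0 := by
    intro h
    rw [Metric.mem_sphere, dist_zero_right, h] at hz0
    simp at hz0
  have hc : 0 < nrm z0 := lt_of_le_of_ne (hnonneg z0) fun h => hz0ne ((hnrm0 z0).mp h.symm)
  refine ⟨nrm z0, hc, fun z => ?_⟩
  rcases eq_or_ne z 0 with rfl | hz
  · simp [(hnrm0 0).mpr rfl]
  · have hnz : 0 < ‖z‖ := norm_pos_iff.mpr hz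
    have hmem : ‖z‖⁻¹ • z ∈ Metric.sphere (0 : Fin n → ℝ) 1 := by
      simp [norm_smul, abs_of_pos (inv_pos.mpr hnz), inv_mul_cancel₀ hnz.ne']
    have hm := hmin hmem
    have h2 : nrm (‖z‖⁻¹ • z) = ‖z‖⁻¹ * nrm z := by
      rw [hnrm_smul, abs_of_pos (inv_pos.mpr hnz)]
    rw [Set.mem_setOf_eq, h2] at hm
    calc nrm z0 * ‖z‖ ≤ (‖z‖⁻¹ * nrm z) * ‖z‖ :=
          mul_le_mul_of_nonneg_right hm (norm_nonneg z)
      _ = nrm z := by field_simp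

include hnrm_smul in
theorem aux_setlt_smul {r : ℝ} (hr : 0 < r) :
    {z : Fin n → ℝ | nrm z < r} = r • {z | nrm z < 1} := by
  ext z
  rw [Set.mem_smul_set_iff_inv_smul_mem₀ hr.ne']
  simp only [Set.mem_setOf_eq, hnrm_smul, abs_of_pos (inv_pos.mpr hr)]
  rw [inv_mul_lt_iff₀ hr, mul_one]

include hnrm_smul in
theorem aux_setle_smul {r : ℝ} (hr : 0 < r) :
    {z : Fin n → ℝ | nrm z ≤ r} = r • {z | nrm z ≤ 1} := by
  ext z
  rw [Set.mem_smul_set_iff_inv_smul_mem₀ hr.ne']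
  simp only [Set.mem_setOf_eq, hnrm_smul, abs_of_pos (inv_pos.mpr hr)]
  rw [inv_mul_le_iff₀ hr, mul_one]

include hnrm_smul in
theorem aux_vol_le {r : ℝ} (hr : 0 < r) :
    volume {z : Fin n → ℝ | nrm z ≤ r}
      = ENNReal.ofReal (r ^ n) * volume {z : Fin n → ℝ | nrm z ≤ 1} := by
  rw [aux_setle_smul nrm hnrm_smul hr,
    Measure.addHaar_smul_of_nonneg volume hr.le, Module.finrank_fin_fun]

include hnrm_smul in
theorem aux_vol_lt_one :
    volume {z : Fin n → ℝ | nrm z < 1} = volume {z : Fin n → ℝ | nrm z ≤ 1} := by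
  refine le_antisymm (measure_mono fun z hz => (le_of_lt hz : nrm z ≤ 1)) ?_
  have htend : Tendsto (fun r : ℝ => ENNReal.ofReal (r ^ n) * volume {z : Fin n → ℝ | nrm z ≤ 1})
      (nhdsWithin 1 (Set.Iio 1)) (nhds (volume {z : Fin n → ℝ | nrm z ≤ 1})) := by
    have h1 : Tendsto (fun r : ℝ => ENNReal.ofReal (r ^ n)) (nhdsWithin 1 (Set.Iio 1))
        (nhds 1) := by
      have h2 : Tendsto (fun r : ℝ => ENNReal.ofReal (r ^ n)) (nhds 1) (nhds 1) := by
        have := (ENNReal.continuous_ofReal.comp (continuous_pow n)).tendsto (1:ℝ)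
        simpa [Function.comp_def] using this
      exact h2.mono_left nhdsWithin_le_nhds
    simpa using ENNReal.Tendsto.mul_const h1 (Or.inl one_ne_zero)
  refine le_of_tendsto htend ?_
  have hin : Set.Ioo (0:ℝ) 1 ∈ nhdsWithin (1:ℝ) (Set.Iio 1) :=
    Ioo_mem_nhdsLT_of_mem (Set.mem_Ioc.mpr ⟨one_pos, le_refl 1⟩)
  filter_upwards [hin] with r hr
  rw [← aux_vol_le nrm hnrm_smul hr.1]
  exact measure_mono fun z hz => (lt_of_le_of_lt hz hr.2 : nrm z < 1)

include hnrm_smul in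
theorem aux_vol_lt {r : ℝ} (hr : 0 < r) :
    volume {z : Fin n → ℝ | nrm z < r}
      = ENNReal.ofReal (r ^ n) * volume {z : Fin n → ℝ | nrm z ≤ 1} := by
  rw [aux_setlt_smul nrm hnrm_smul hr,
    Measure.addHaar_smul_of_nonneg volume hr.le, Module.finrank_fin_fun,
    aux_vol_lt_one nrm hnrm_smul]

include hnrm_smul in
theorem aux_vol_ann (hcont : Continuous nrm)
    (hKfin : volume {z : Fin n → ℝ | nrm z ≤ 1} ≠ ⊤) {b : ℝ} (hb0 : 0 ≤ b) :
    volume {y : Fin n → ℝ | 1 ≤ nrm y ∧ nrm y < b}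
      = ENNReal.ofReal (b ^ n - 1) * volume {z : Fin n → ℝ | nrm z ≤ 1} := by
  by_cases hb : 1 ≤ b
  · have h1 : {y : Fin n → ℝ | 1 ≤ nrm y ∧ nrm y < b}
        = {y | nrm y < b} \ {y | nrm y < 1} := by
      ext y
      simp only [Set.mem_setOf_eq, Set.mem_diff, not_lt]
      tauto
    have hmeas1 : NullMeasurableSet {y : Fin n → ℝ | nrm y < 1} volume :=
      ((isOpen_lt hcont continuous_const).measurableSet).nullMeasurableSet
    have hfin1 : volume {y : Fin n → ℝ | nrm y < 1} ≠ ⊤ := by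
      rw [aux_vol_lt_one nrm hnrm_smul]; exact hKfin
    have hsub : {y : Fin n → ℝ | nrm y < 1} ⊆ {y | nrm y < b} :=
      fun y hy => lt_of_lt_of_le hy hb
    rw [h1, measure_diff hsub hmeas1 hfin1,
      aux_vol_lt nrm hnrm_smul (lt_of_lt_of_le one_pos hb),
      aux_vol_lt_one nrm hnrm_smul]
    generalize hK : volume {z : Fin n → ℝ | nrm z ≤ 1} = K at hKfin ⊢
    nth_rewrite 2 [← one_mul K]
    rw [← ENNReal.ofReal_one, ← ENNReal.sub_mul (fun _ _ => hKfin),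
      ← ENNReal.ofReal_sub _ zero_le_one]
  · push_neg at hb
    have h1 : {y : Fin n → ℝ | 1 ≤ nrm y ∧ nrm y < b} = ∅ := by
      ext y
      simp only [Set.mem_setOf_eq, Set.mem_empty_iff_false, iff_false, not_and, not_lt]
      intro h; linarith
    have h2 : b ^ n - 1 ≤ 0 := by
      have : b ^ n ≤ 1 ^ n := pow_le_pow_left₀ hb0 hb.le n
      simpa using this
    rw [h1, ENNReal.ofReal_of_nonpos h2]
    simp

end Aux

/-- `ω_n = n · λ({z : ‖z‖ ≤ 1})` for a norm `nrm` on `ℝⁿ`. -/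
noncomputable def omegaConst (n : ℕ) (nrm : (Fin n → ℝ) → ℝ) : ℝ :=
  n * (volume {z : Fin n → ℝ | nrm z ≤ 1}).toReal

/-- The region `Ω_T = {(x,y) : 1 ≤ ‖y‖ < T, |xᵢ| < ϑᵢ‖y‖^{-wᵢ}}`. -/
noncomputable def OmegaSet (m n : ℕ) (nrm : (Fin n → ℝ) → ℝ) (ϑ w : Fin m → ℝ) (T : ℝ) :
    Set ((Fin m → ℝ) × (Fin n → ℝ)) :=
  {z | 1 ≤ nrm z.2 ∧ nrm z.2 < T ∧ ∀ i, |z.1 i| < ϑ i * nrm z.2 ^ (-(w i))}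

set_option maxHeartbeats 1000000 in
theorem volume_OmegaSet (m n : ℕ) (hm : 2 ≤ m) (hn : 1 ≤ n)
    (nrm : (Fin n → ℝ) → ℝ)
    (hnrm0 : ∀ x, nrm x = 0 ↔ x = 0)
    (hnrm_smul : ∀ (c : ℝ) x, nrm (c • x) = |c| * nrm x)
    (hnrm_add : ∀ x y, nrm (x + y) ≤ nrm x + nrm y)
    (ϑ : Fin m → ℝ) (hϑ : ∀ i, 0 < ϑ i)
    (w : Fin m → ℝ) (hw : ∀ i, 0 < w i) (hwsum : ∑ i, w i = (n : ℝ)) :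
    ∀ T : ℝ, 1 ≤ T →
      volume (OmegaSet m n nrm ϑ w T) =
        ENNReal.ofReal (2 ^ m * (∏ i, ϑ i) * omegaConst n nrm * Real.log T) := by
  intro T hT
  have hT0 : 0 < T := lt_of_lt_of_le one_pos hT
  have hnn : ∀ x, 0 ≤ nrm x := aux_nrm_nonneg nrm hnrm0 hnrm_smul hnrm_add
  have hcont : Continuous nrm := aux_nrm_continuous nrm hnrm0 hnrm_smul hnrm_add
  obtain ⟨c, hcpos, hlow⟩ := aux_nrm_lower nrm hnrm0 hnrm_smul hnrm_add hn
  set K := volume {z : Fin n → ℝ | nrm z ≤ 1} with hKdef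
  have hKfin : K ≠ ⊤ := by
    have hsub : {z : Fin n → ℝ | nrm z ≤ 1} ⊆ Metric.closedBall 0 c⁻¹ := by
      intro z hz
      rw [Metric.mem_closedBall, dist_zero_right]
      rw [← mul_le_mul_iff_right₀ hcpos, mul_inv_cancel₀ hcpos.ne']
      exact le_trans (hlow z) hz
    exact ne_top_of_le_ne_top measure_closedBall_lt_top.ne (measure_mono hsub)
  have hKpos : K ≠ 0 := by
    set C0 := ∑ i, nrm (Pi.single i (1:ℝ)) with hC0
    have hC0nn : 0 ≤ C0 := Finset.sum_nonneg fun i _ => hnn _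
    have hsub : Metric.closedBall (0 : Fin n → ℝ) (C0 + 1)⁻¹ ⊆ {z | nrm z ≤ 1} := by
      intro z hz
      rw [Metric.mem_closedBall, dist_zero_right] at hz
      have h1 : nrm z ≤ C0 * ‖z‖ := aux_nrm_le_const nrm hnrm0 hnrm_smul hnrm_add z
      have h2 : C0 * ‖z‖ ≤ C0 * (C0 + 1)⁻¹ := mul_le_mul_of_nonneg_left hz hC0nn
      have h3 : C0 * (C0 + 1)⁻¹ ≤ 1 := by
        rw [mul_inv_le_iff₀ (by linarith), one_mul]; linarith
      exact le_trans h1 (le_trans h2 h3)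
    refine ne_of_gt (lt_of_lt_of_le ?_ (measure_mono hsub))
    exact Metric.measure_closedBall_pos volume 0 (inv_pos.mpr (by linarith))
  set C := 2 ^ m * ∏ i, ϑ i with hCdef
  have hprodpos : 0 < ∏ i, ϑ i := Finset.prod_pos fun i _ => hϑ i
  have hCpos : 0 < C := by positivity
  set A := {y : Fin n → ℝ | 1 ≤ nrm y ∧ nrm y < T} with hAdef
  have hAmeas : MeasurableSet A :=
    ((isClosed_le continuous_const hcont).measurableSet).inter
      (isOpen_lt hcont continuous_const).measurableSet
  -- measurability of Ω
  have hΩeq : OmegaSet m n nrm ϑ w T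
      = ({z : (Fin m → ℝ) × (Fin n → ℝ) | 1 ≤ nrm z.2} ∩ {z | nrm z.2 < T}) ∩
        ⋂ i, {z : (Fin m → ℝ) × (Fin n → ℝ) |
          |z.1 i| < ϑ i * Real.exp (Real.log (nrm z.2) * (-(w i)))} := by
    ext z
    simp only [OmegaSet, Set.mem_setOf_eq, Set.mem_inter_iff, Set.mem_iInter]
    constructor
    · rintro ⟨h1, h2, h3⟩
      refine ⟨⟨h1, h2⟩, fun i => ?_⟩
      rw [← Real.rpow_def_of_pos (lt_of_lt_of_le one_pos h1) (-(w i))]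
      exact h3 i
    · rintro ⟨⟨h1, h2⟩, h3⟩
      refine ⟨h1, h2, fun i => ?_⟩
      rw [Real.rpow_def_of_pos (lt_of_lt_of_le one_pos h1) (-(w i))]
      exact h3 i
  have hnrm2 : Measurable fun z : (Fin m → ℝ) × (Fin n → ℝ) => nrm z.2 :=
    (hcont.comp continuous_snd).measurable
  have hΩmeas : MeasurableSet (OmegaSet m n nrm ϑ w T) := by
    rw [hΩeq]
    refine (MeasurableSet.inter ?_ ?_).inter (MeasurableSet.iInter fun i => ?_)
    · exact measurableSet_le measurable_const hnrm2
    · exact measurableSet_lt hnrm2 measurable_const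
    · refine measurableSet_lt ?_ ?_
      · exact ((continuous_apply i).comp continuous_fst).abs.measurable
      · exact (measurable_const.mul
          ((Real.measurable_log.comp hnrm2).mul measurable_const).exp)
  -- slice computation
  have hslice : ∀ y : Fin n → ℝ,
      volume ((fun x : Fin m → ℝ => (x, y)) ⁻¹' OmegaSet m n nrm ϑ w T)
        = A.indicator (fun y => ENNReal.ofReal (C * ((nrm y) ^ n)⁻¹)) y := by
    intro y
    by_cases hy : y ∈ A
    · rw [Set.indicator_of_mem hy]
      have hr1 : 1 ≤ nrm y := hy.1
      have hrpos : 0 < nrm y := lt_of_lt_of_le one_pos hr1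
      have hpre : (fun x : Fin m → ℝ => (x, y)) ⁻¹' OmegaSet m n nrm ϑ w T
          = Set.pi Set.univ fun i =>
              Set.Ioo (-(ϑ i * nrm y ^ (-(w i)))) (ϑ i * nrm y ^ (-(w i))) := by
        ext x
        simp only [Set.mem_preimage, OmegaSet, Set.mem_setOf_eq, Set.mem_pi, Set.mem_univ,
          Set.mem_Ioo, forall_true_left, hy.1, hy.2, true_and, abs_lt]
      rw [hpre, volume_pi_pi]
      have hterm : ∀ i, volume (Set.Ioo (-(ϑ i * nrm y ^ (-(w i)))) (ϑ i * nrm y ^ (-(w i))))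
          = ENNReal.ofReal (2 * (ϑ i * nrm y ^ (-(w i)))) := by
        intro i
        rw [Real.volume_Ioo]
        congr 1
        ring
      rw [Finset.prod_congr rfl fun i _ => hterm i,
        ← ENNReal.ofReal_prod_of_nonneg (fun i _ => mul_nonneg (by norm_num)
          (mul_nonneg (hϑ i).le (Real.rpow_nonneg (hnn y) _)))]
      congr 1
      have hrp : ∏ i, nrm y ^ (-(w i)) = (nrm y ^ n)⁻¹ := by
        rw [← Real.rpow_sum_of_pos hrpos (fun i => -(w i)) Finset.univ]
        rw [Finset.sum_neg_distrib, hwsum, Real.rpow_neg hrpos.le,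
          Real.rpow_natCast]
      calc ∏ i, 2 * (ϑ i * nrm y ^ (-(w i)))
          = (∏ _i : Fin m, (2:ℝ)) * ((∏ i, ϑ i) * ∏ i, nrm y ^ (-(w i))) := by
            rw [← Finset.prod_mul_distrib, ← Finset.prod_mul_distrib]
        _ = C * ((nrm y) ^ n)⁻¹ := by
            rw [Finset.prod_const, Finset.card_univ, Fintype.card_fin, hrp, hCdef]
            ring
    · rw [Set.indicator_of_notMem hy]
      have hpre : (fun x : Fin m → ℝ => (x, y)) ⁻¹' OmegaSet m n nrm ϑ w T = ∅ := by
        ext x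
        simp only [Set.mem_preimage, OmegaSet, Set.mem_setOf_eq, Set.mem_empty_iff_false,
          iff_false]
        intro h
        exact hy ⟨h.1, h.2.1⟩
      rw [hpre, measure_empty]
  have hfubini : volume (OmegaSet m n nrm ϑ w T)
      = ∫⁻ y in A, ENNReal.ofReal (C * ((nrm y) ^ n)⁻¹) := by
    rw [Measure.volume_eq_prod, Measure.prod_apply_symm hΩmeas]
    rw [lintegral_congr hslice, lintegral_indicator hAmeas]
  -- layer cake
  set f : (Fin n → ℝ) → ℝ := fun y => C * ((nrm y) ^ n)⁻¹ with hfdef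
  have hfmeas : Measurable f :=
    measurable_const.mul ((hcont.measurable.pow_const n).inv)
  have hfnn : ∀ y, 0 ≤ f y := fun y => by
    have := hnn y; positivity
  have hlayer : ∫⁻ y in A, ENNReal.ofReal (f y)
      = ∫⁻ t in Set.Ioi (0:ℝ), (volume.restrict A) {y | t < f y} :=
    lintegral_eq_lintegral_meas_lt (volume.restrict A)
      (Filter.Eventually.of_forall hfnn) hfmeas.aemeasurable
  have hn' : (0:ℝ) < n := by exact_mod_cast hn
  -- the distribution function
  have hG : ∀ t ∈ Set.Ioi (0:ℝ), (volume.restrict A) {y | t < f y}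
      = ENNReal.ofReal (min (T ^ n) (C / t) - 1) * K := by
    intro t ht
    rw [Set.mem_Ioi] at ht
    rw [Measure.restrict_apply' hAmeas]
    set b := min T ((C / t) ^ ((n:ℝ)⁻¹)) with hbdef
    have hCt : 0 ≤ C / t := by positivity
    have hb0 : 0 ≤ b := le_min (by linarith) (Real.rpow_nonneg hCt _)
    have hset : {y | t < f y} ∩ A = {y | 1 ≤ nrm y ∧ nrm y < b} := by
      ext y
      simp only [Set.mem_inter_iff, Set.mem_setOf_eq, hAdef, hfdef]
      have hiff : ∀ (_ : 1 ≤ nrm y),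
          (t < C * ((nrm y) ^ n)⁻¹ ↔ nrm y < (C / t) ^ ((n:ℝ)⁻¹)) := by
        intro h1
        have hrpos : 0 < nrm y := lt_of_lt_of_le one_pos h1
        have hppos : 0 < nrm y ^ n := pow_pos hrpos n
        rw [Real.lt_rpow_inv_iff_of_pos (hnn y) hCt hn', Real.rpow_natCast]
        rw [← div_eq_mul_inv, lt_div_iff₀ hppos, lt_div_iff₀ ht, mul_comm]
      constructor
      · rintro ⟨hlt, h1, h2⟩
        exact ⟨h1, lt_min h2 ((hiff h1).mp hlt)⟩
      · rintro ⟨h1, h2⟩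
        have h2T : nrm y < T := lt_of_lt_of_le h2 (min_le_left _ _)
        have h2s : nrm y < (C / t) ^ ((n:ℝ)⁻¹) := lt_of_lt_of_le h2 (min_le_right _ _)
        exact ⟨(hiff h1).mpr h2s, h1, h2T⟩
    rw [hset, aux_vol_ann nrm hnrm_smul hcont hKfin hb0, ← hKdef]
    congr 2
    have hpow : ((C / t) ^ ((n:ℝ)⁻¹)) ^ n = C / t := by
      rw [← Real.rpow_natCast ((C / t) ^ ((n:ℝ)⁻¹)) n, ← Real.rpow_mul hCt,
        inv_mul_cancel₀ (ne_of_gt hn'), Real.rpow_one]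
    have hbn : b ^ n = min (T ^ n) (C / t) := by
      rcases le_total T ((C / t) ^ ((n:ℝ)⁻¹)) with h | h
      · rw [hbdef, min_eq_left h, min_eq_left]
        calc T ^ n ≤ ((C / t) ^ ((n:ℝ)⁻¹)) ^ n := pow_le_pow_left₀ (by linarith) h n
          _ = C / t := hpow
      · rw [hbdef, min_eq_right h, min_eq_right]
        · exact hpow
        · calc C / t = ((C / t) ^ ((n:ℝ)⁻¹)) ^ n := hpow.symm
            _ ≤ T ^ n := pow_le_pow_left₀ (Real.rpow_nonneg hCt _) h n
    rw [hbn]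
  -- the one-dimensional integral
  set a := C / T ^ n with hadef
  have hTn1 : (1:ℝ) ≤ T ^ n := one_le_pow₀ hT
  have hTnpos : (0:ℝ) < T ^ n := by linarith
  have hapos : 0 < a := by positivity
  have haC : a ≤ C := by
    rw [hadef, div_le_iff₀ hTnpos]
    nlinarith
  have haTn : a * T ^ n = C := by
    rw [hadef]; field_simp
  have hpiece1 : ∫⁻ t in Set.Ioc (0:ℝ) a, ENNReal.ofReal (min (T ^ n) (C / t) - 1) * K
      = ENNReal.ofReal (T ^ n - 1) * K * ENNReal.ofReal a := by
    rw [setLIntegral_congr_fun measurableSet_Ioc ?_,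
      setLIntegral_const, Real.volume_Ioc, sub_zero]
    intro t ht
    have htpos : 0 < t := ht.1
    have hmin : min (T ^ n) (C / t) = T ^ n := by
      apply min_eq_left
      rw [le_div_iff₀ htpos]
      calc T ^ n * t ≤ T ^ n * a := by nlinarith [ht.2]
        _ = C := by rw [mul_comm]; exact haTn
    beta_reduce
    rw [hmin]
  have hpiece3 : ∫⁻ t in Set.Ioi C, ENNReal.ofReal (min (T ^ n) (C / t) - 1) * K = 0 := by
    rw [setLIntegral_congr_fun measurableSet_Ioi ?_,
      lintegral_zero]
    intro t ht
    rw [Set.mem_Ioi] at ht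
    have htpos : 0 < t := lt_trans hCpos ht
    have h2 : min (T ^ n) (C / t) - 1 ≤ 0 := by
      have hmr := min_le_right (T ^ n) (C / t)
      have h1 : C / t ≤ 1 := by rw [div_le_one htpos]; linarith
      linarith
    beta_reduce
    rw [ENNReal.ofReal_of_nonpos h2, zero_mul]
  have hCa : C / a = T ^ n := by
    rw [hadef]; field_simp
  have hlogCa : Real.log (C / a) = (n:ℝ) * Real.log T := by
    rw [hCa, Real.log_pow]
  have hpiece2 : ∫⁻ t in Set.Ioc a C, ENNReal.ofReal (min (T ^ n) (C / t) - 1) * K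
      = ENNReal.ofReal (C * ((n:ℝ) * Real.log T) - (C - a)) * K := by
    have hcongr : ∀ t ∈ Set.Ioc a C, ENNReal.ofReal (min (T ^ n) (C / t) - 1) * K
        = ENNReal.ofReal (C / t - 1) * K := by
      intro t ht
      have htpos : 0 < t := lt_trans hapos ht.1
      have hmin : min (T ^ n) (C / t) = C / t := by
        apply min_eq_right
        rw [div_le_iff₀ htpos]
        calc C = a * T ^ n := haTn.symm
          _ ≤ t * T ^ n := by nlinarith [ht.1]
          _ = T ^ n * t := by ring
      rw [hmin]
    rw [setLIntegral_congr_fun measurableSet_Ioc hcongr]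
    have hgmeas : Measurable fun t : ℝ => ENNReal.ofReal (C / t - 1) := by
      apply ENNReal.measurable_ofReal.comp
      simp only [div_eq_mul_inv]
      exact (measurable_const.mul measurable_inv).sub measurable_const
    rw [lintegral_mul_const K hgmeas]
    congr 1
    have hint : IntegrableOn (fun t : ℝ => C / t - 1) (Set.Ioc a C) := by
      apply IntegrableOn.mono_set _ Set.Ioc_subset_Icc_self
      apply ContinuousOn.integrableOn_compact isCompact_Icc
      apply ContinuousOn.sub _ continuousOn_const
      apply ContinuousOn.div continuousOn_const continuousOn_id
      intro x hx
      exact ne_of_gt (lt_of_lt_of_le hapos hx.1)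
    have hnnae : 0 ≤ᵐ[volume.restrict (Set.Ioc a C)] fun t : ℝ => C / t - 1 := by
      refine (ae_restrict_iff' measurableSet_Ioc).mpr
        (Filter.Eventually.of_forall fun t ht => ?_)
      have htpos : 0 < t := lt_trans hapos ht.1
      have h1 : 1 ≤ C / t := by rw [le_div_iff₀ htpos]; linarith [ht.2]
      simp only [Pi.zero_apply]; linarith
    rw [← ofReal_integral_eq_lintegral_ofReal hint hnnae]
    congr 1
    rw [← intervalIntegral.integral_of_le haC]
    have h0not : (0:ℝ) ∉ Set.uIcc a C := by
      rw [Set.uIcc_of_le haC]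
      intro h
      exact absurd h.1 (by linarith)
    have hIone : IntervalIntegrable (fun t : ℝ => C * (1 / t)) volume a C := by
      apply IntervalIntegrable.const_mul
      apply intervalIntegral.intervalIntegrable_one_div
      · intro x hx
        rw [Set.uIcc_of_le haC] at hx
        exact ne_of_gt (lt_of_lt_of_le hapos hx.1)
      · exact continuousOn_id
    have heq1 : ∀ t : ℝ, C / t - 1 = C * (1 / t) - 1 := fun t => by ring
    simp_rw [heq1]
    rw [intervalIntegral.integral_sub hIone intervalIntegrable_const,
      intervalIntegral.integral_const_mul, integral_one_div h0not,
      integral_one, hlogCa]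
  -- nonnegativity of the middle piece value
  have hv : 0 ≤ C * ((n:ℝ) * Real.log T) - (C - a) := by
    set u := (n:ℝ) * Real.log T with hudef
    have hu0 : 0 ≤ u := mul_nonneg (Nat.cast_nonneg n) (Real.log_nonneg hT)
    have hTnexp : T ^ n = Real.exp u := by
      have h1 : Real.exp u = (Real.exp (Real.log T)) ^ n := by
        rw [hudef, Real.exp_nat_mul]
      rw [h1, Real.exp_log hT0]
    have hkey : 1 - u ≤ (T ^ n)⁻¹ := by
      rw [hTnexp, ← Real.exp_neg]
      linarith [Real.add_one_le_exp (-u)]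
    have haeq : a = C * (T ^ n)⁻¹ := by rw [hadef]; ring
    nlinarith [mul_le_mul_of_nonneg_left hkey hCpos.le]
  -- assembling
  have hfinal : volume (OmegaSet m n nrm ϑ w T)
      = ENNReal.ofReal (C * ((n:ℝ) * Real.log T)) * K := by
    rw [hfubini, hlayer,
      setLIntegral_congr_fun measurableSet_Ioi hG,
      ← Set.Ioc_union_Ioi_eq_Ioi hapos.le,
      lintegral_union measurableSet_Ioi (Set.Ioc_disjoint_Ioi le_rfl),
      ← Set.Ioc_union_Ioi_eq_Ioi haC,
      lintegral_union measurableSet_Ioi (Set.Ioc_disjoint_Ioi le_rfl),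
      hpiece1, hpiece2, hpiece3, add_zero]
    rw [mul_right_comm, ← ENNReal.ofReal_mul (by linarith),
      show (T ^ n - 1) * a = C - a by nlinarith [haTn],
      ← add_mul, ← ENNReal.ofReal_add (by linarith) hv]
    congr 2
    ring
  rw [hfinal, ← ENNReal.ofReal_toReal hKfin,
    ← ENNReal.ofReal_mul (mul_nonneg hCpos.le (mul_nonneg (Nat.cast_nonneg n) (Real.log_nonneg hT)))]
  congr 1
  simp only [omegaConst]
  rw [← hKdef, hCdef]
  ring
end

section
/- For every integer M ≥ 1, ∫_{[0,1]^{mn}×[0,1]^m} #( Λ_{u,v} ∩ Ω_{e^M} ) du dv = 2^m·ϑ₁⋯ϑ_m · Σ_{q ∈ ℤⁿ, 1 ≤ ‖q‖ < e^M} ‖q‖^{-n}, where the integral is over m×n matrices u with entries in [0,1] and vectors v ∈ [0,1]^m. -/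
open MeasureTheory Filter Real ENNReal

/-- The affine lattice `Λ_{u,v} = {(p + u·q + v, q) : p ∈ ℤ^m, q ∈ ℤⁿ}`. -/
def affLattice (m n : ℕ) (u : Fin m → Fin n → ℝ) (v : Fin m → ℝ) :
    Set ((Fin m → ℝ) × (Fin n → ℝ)) :=
  {z | ∃ p : Fin m → ℤ, ∃ q : Fin n → ℤ,
    z = (fun i => (p i : ℝ) + (∑ j, u i j * (q j : ℝ)) + v i, fun j => (q j : ℝ))}

/-- The box of pairs `(u,v)` with `u` an `m×n` matrix with entries in `[0,1]` and
`v ∈ [0,1]^m`. -/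
def box01 (m n : ℕ) : Set ((Fin m → Fin n → ℝ) × (Fin m → ℝ)) :=
  {uv | (∀ i j, uv.1 i j ∈ Set.Icc (0 : ℝ) 1) ∧ ∀ i, uv.2 i ∈ Set.Icc (0 : ℝ) 1}

section Aux

lemma nrm_lower (n : ℕ) (hn : 1 ≤ n) (nrm : (Fin n → ℝ) → ℝ)
    (hnrm0 : ∀ x, nrm x = 0 ↔ x = 0)
    (hnrm_smul : ∀ (c : ℝ) x, nrm (c • x) = |c| * nrm x)
    (hnrm_add : ∀ x y, nrm (x + y) ≤ nrm x + nrm y) :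
    ∃ c > 0, ∀ x, c * ‖x‖ ≤ nrm x := by
  have h0 : nrm 0 = 0 := (hnrm0 0).2 rfl
  have hneg : ∀ x, nrm (-x) = nrm x := by
    intro x
    have : (-x) = (-1 : ℝ) • x := by simp
    rw [this, hnrm_smul]; simp
  have hnonneg : ∀ x, 0 ≤ nrm x := by
    intro x
    have := hnrm_add x (-x)
    rw [add_neg_cancel, h0, hneg] at this
    linarith
  -- Lipschitz bound
  set C : ℝ := ∑ j : Fin n, nrm (Pi.single j 1) with hC
  have hsum : ∀ z : Fin n → ℝ, nrm z ≤ C * ‖z‖ := by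
    intro z
    have hz : z = ∑ j : Fin n, (z j) • (Pi.single j 1 : Fin n → ℝ) := by
      funext k; simp [Pi.single_apply, Finset.sum_ite_eq']
    calc nrm z = nrm (∑ j : Fin n, (z j) • (Pi.single j 1 : Fin n → ℝ)) := by rw [← hz]
    _ ≤ ∑ j : Fin n, nrm ((z j) • (Pi.single j 1 : Fin n → ℝ)) := by
        classical
        induction (Finset.univ : Finset (Fin n)) using Finset.cons_induction with
        | empty => simp [h0]
        | cons a s ha ih =>
          rw [Finset.sum_cons, Finset.sum_cons]
          exact le_trans (hnrm_add _ _) (by linarith)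
    _ = ∑ j : Fin n, |z j| * nrm (Pi.single j (1:ℝ)) := by
        simp_rw [hnrm_smul]
    _ ≤ ∑ j : Fin n, ‖z‖ * nrm (Pi.single j (1:ℝ)) := by
        apply Finset.sum_le_sum
        intro j _
        have h1 : |z j| ≤ ‖z‖ := by
          have := norm_le_pi_norm z j
          simpa using this
        exact mul_le_mul_of_nonneg_right h1 (hnonneg _)
    _ = C * ‖z‖ := by rw [hC, Finset.sum_mul]; exact Finset.sum_congr rfl fun j _ => mul_comm _ _
  have hcont : Continuous nrm := by
    have hlip : LipschitzWith (Real.toNNReal C) nrm := by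
      apply LipschitzWith.of_dist_le_mul
      intro x y
      have h1 : nrm x - nrm y ≤ nrm (x - y) := by
        have := hnrm_add (x - y) y; simp at this; linarith
      have h2 : nrm y - nrm x ≤ nrm (x - y) := by
        have := hnrm_add (y - x) x; simp at this
        have h3 : nrm (y - x) = nrm (x - y) := by
          rw [← hneg (y - x)]; congr 1; abel
        linarith
      have habs : |nrm x - nrm y| ≤ nrm (x - y) := abs_sub_le_iff.2 ⟨h1, h2⟩
      have : nrm (x - y) ≤ C * ‖x - y‖ := hsum _
      rw [Real.dist_eq, dist_eq_norm]
      have hC0 : (0:ℝ) ≤ C := Finset.sum_nonneg fun j _ => hnonneg _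
      rw [Real.coe_toNNReal _ hC0]
      linarith
    exact hlip.continuous
  -- compactness on the sphere
  have hne : Nonempty (Fin n) := ⟨⟨0, hn⟩⟩
  have hsphne : (Metric.sphere (0 : Fin n → ℝ) 1).Nonempty := by
    have : Inhabited (Fin n) := ⟨⟨0, hn⟩⟩
    have : Nontrivial (Fin n → ℝ) := Pi.nontrivial
    exact NormedSpace.sphere_nonempty.2 zero_le_one
  obtain ⟨x₀, hx₀, hmin⟩ := (isCompact_sphere (0 : Fin n → ℝ) 1).exists_isMinOn hsphne
    hcont.continuousOn
  have hx₀norm : ‖x₀‖ = 1 := by simpa using hx₀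
  have hx₀ne : x₀ ≠ 0 := by
    intro h; rw [h] at hx₀norm; simp at hx₀norm
  have hc0 : 0 < nrm x₀ := by
    rcases lt_or_eq_of_le (hnonneg x₀) with h | h
    · exact h
    · exact absurd ((hnrm0 x₀).1 h.symm) hx₀ne
  refine ⟨nrm x₀, hc0, fun x => ?_⟩
  rcases eq_or_ne x 0 with rfl | hx
  · simp [h0]
  · have hxn : (0:ℝ) < ‖x‖ := norm_pos_iff.2 hx
    have hmem : ‖x‖⁻¹ • x ∈ Metric.sphere (0 : Fin n → ℝ) 1 := by
      simp [norm_smul, abs_of_pos (inv_pos.2 hxn), inv_mul_cancel₀ hxn.ne']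
    have hle : nrm x₀ ≤ nrm (‖x‖⁻¹ • x) := hmin hmem
    have h2 : nrm (‖x‖⁻¹ • x) = ‖x‖⁻¹ * nrm x := by
      rw [hnrm_smul]; rw [abs_of_pos (inv_pos.2 hxn)]
    rw [h2] at hle
    calc nrm x₀ * ‖x‖ ≤ (‖x‖⁻¹ * nrm x) * ‖x‖ :=
      mul_le_mul_of_nonneg_right hle hxn.le
    _ = nrm x := by field_simp

lemma pbox_finite {k : ℕ} (d e : Fin k → ℝ) :
    {p : Fin k → ℤ | ∀ i, |(p i : ℝ) + d i| < e i}.Finite := by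
  have hcoord : ∀ i : Fin k, {x : ℤ | |(x:ℝ)| ≤ e i + |d i|}.Finite := by
    intro i
    apply (Set.finite_Icc (-⌈e i + |d i|⌉) ⌈e i + |d i|⌉).subset
    intro x hx
    simp only [Set.mem_setOf_eq] at hx
    rw [abs_le] at hx
    constructor
    · have h1 : -(⌈e i + |d i|⌉ : ℝ) ≤ (x:ℝ) := le_trans (neg_le_neg (Int.le_ceil _)) hx.1
      exact_mod_cast h1
    · have h2 : (x:ℝ) ≤ (⌈e i + |d i|⌉ : ℝ) := le_trans hx.2 (Int.le_ceil _)
      exact_mod_cast h2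
  apply (Set.Finite.pi hcoord).subset
  intro p hp
  simp only [Set.mem_pi, Set.mem_univ, forall_true_left, Set.mem_setOf_eq]
  intro i
  have := hp i
  have h1 : |(p i : ℝ)| ≤ |(p i : ℝ) + d i| + |d i| := by
    calc |(p i : ℝ)| = |((p i : ℝ) + d i) + (- d i)| := by ring_nf
    _ ≤ |(p i : ℝ) + d i| + |(- d i)| := abs_add_le _ _
    _ = |(p i : ℝ) + d i| + |d i| := by rw [abs_neg]
  linarith [this]

lemma qset_finite (n : ℕ) (nrm : (Fin n → ℝ) → ℝ) (T c : ℝ) (hc : 0 < c)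
    (hlow : ∀ x, c * ‖x‖ ≤ nrm x) :
    {q : Fin n → ℤ | 1 ≤ nrm (fun j => (q j:ℝ)) ∧ nrm (fun j => (q j:ℝ)) < T}.Finite := by
  apply (pbox_finite (fun _ : Fin n => (0:ℝ)) (fun _ => T / c + 1)).subset
  rintro q ⟨-, hqT⟩
  intro j
  have h1 : |(q j : ℝ)| ≤ ‖(fun j => (q j:ℝ) : Fin n → ℝ)‖ := by
    have := norm_le_pi_norm (fun j => (q j:ℝ) : Fin n → ℝ) j
    simpa using this
  have h2 : c * ‖(fun j => (q j:ℝ) : Fin n → ℝ)‖ ≤ nrm (fun j => (q j:ℝ)) := hlow _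
  have h3 : ‖(fun j => (q j:ℝ) : Fin n → ℝ)‖ < T / c := by
    rw [lt_div_iff₀ hc]
    linarith
  rw [add_zero]
  linarith

lemma unfold_lemma (m : ℕ) (B : Set (Fin m → ℝ)) (hB : MeasurableSet B) (a : Fin m → ℝ) :
    ∫⁻ v in Set.pi Set.univ (fun _ : Fin m => Set.Ico (0:ℝ) 1),
      ∑' p : Fin m → ℤ, B.indicator 1 (fun i => (p i : ℝ) + a i + v i) = volume B := by
  set s : Set (Fin m → ℝ) := Set.pi Set.univ (fun _ : Fin m => Set.Ico (0:ℝ) 1) with hs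
  have hsmeas : MeasurableSet s := MeasurableSet.univ_pi fun i => measurableSet_Ico
  have hgmeas : ∀ p : Fin m → ℤ,
      Measurable (fun v : Fin m → ℝ => (fun i => (p i : ℝ) + a i + v i)) := fun p =>
    measurable_pi_lambda _ fun i => (measurable_pi_apply i).const_add _
  have h_ind : ∀ (p : Fin m → ℤ) (v : Fin m → ℝ),
      B.indicator (1 : (Fin m → ℝ) → ℝ≥0∞) (fun i => (p i : ℝ) + a i + v i) =
      ((fun v : Fin m → ℝ => (fun i => (p i : ℝ) + a i + v i)) ⁻¹' B).indicator 1 v := by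
    intro p v
    by_cases h : (fun i => (p i : ℝ) + a i + v i) ∈ B <;>
      simp [Set.indicator_apply, h, Set.mem_preimage]
  simp_rw [h_ind]
  rw [lintegral_tsum (fun p => (measurable_one.indicator ((hgmeas p) hB)).aemeasurable)]
  have hterm : ∀ p : Fin m → ℤ,
      ∫⁻ v in s, ((fun v : Fin m → ℝ => (fun i => (p i : ℝ) + a i + v i)) ⁻¹' B).indicator 1 v
      = volume (B ∩ Set.pi Set.univ (fun i => Set.Ico ((p i : ℝ) + a i) ((p i : ℝ) + a i + 1))) := by
    intro p
    set cp : Fin m → ℝ := fun i => (p i : ℝ) + a i with hcp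
    rw [lintegral_indicator_one ((hgmeas p) hB)]
    rw [Measure.restrict_apply ((hgmeas p) hB)]
    have hset : (fun v : Fin m → ℝ => (fun i => (p i : ℝ) + a i + v i)) ⁻¹' B ∩ s
        = (fun v : Fin m → ℝ => v + cp) ⁻¹' (B ∩ Set.pi Set.univ (fun i => Set.Ico (cp i) (cp i + 1))) := by
      ext v
      have hfun : (fun i => (p i : ℝ) + a i + v i) = v + cp := by
        funext i; simp [hcp]; ring
      simp only [Set.mem_inter_iff, Set.mem_preimage, Set.mem_pi, Set.mem_univ, forall_true_left,
        Set.mem_Ico, hs, hfun]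
      constructor
      · rintro ⟨h1, h2⟩
        refine ⟨h1, fun i => ?_⟩
        have := h2 i
        simp only [Pi.add_apply] at *
        constructor <;> linarith [this.1, this.2]
      · rintro ⟨h1, h2⟩
        refine ⟨h1, fun i => ?_⟩
        have := h2 i
        simp only [Pi.add_apply] at this
        exact ⟨by linarith [this.1], by linarith [this.2]⟩
    rw [hset, measure_preimage_add_right]
  simp_rw [hterm]
  have him : ∀ p : Fin m → ℤ, MeasurableSet
      (B ∩ Set.pi Set.univ (fun i => Set.Ico ((p i : ℝ) + a i) ((p i : ℝ) + a i + 1))) :=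
    fun p => hB.inter (MeasurableSet.univ_pi fun i => measurableSet_Ico)
  have hdisj : Pairwise (Function.onFun Disjoint
      (fun p : Fin m → ℤ => B ∩ Set.pi Set.univ (fun i => Set.Ico ((p i : ℝ) + a i) ((p i : ℝ) + a i + 1)))) := by
    intro p p' hne
    rw [Function.onFun, Set.disjoint_left]
    rintro x ⟨-, h1⟩ ⟨-, h2⟩
    apply hne
    funext i
    have e1 := h1 i (Set.mem_univ i)
    have e2 := h2 i (Set.mem_univ i)
    simp only [Set.mem_Ico] at e1 e2
    have f1 : ⌊x i - a i⌋ = p i := by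
      rw [Int.floor_eq_iff]
      refine ⟨by linarith [e1.1], ?_⟩
      push_cast
      linarith [e1.2]
    have f2 : ⌊x i - a i⌋ = p' i := by
      rw [Int.floor_eq_iff]
      refine ⟨by linarith [e2.1], ?_⟩
      push_cast
      linarith [e2.2]
    rw [← f1, f2]
  rw [← measure_iUnion hdisj him]
  congr 1
  rw [← Set.inter_iUnion]
  rw [Set.inter_eq_left]
  intro x _
  simp only [Set.mem_iUnion, Set.mem_pi, Set.mem_univ, forall_true_left, Set.mem_Ico]
  refine ⟨fun i => ⌊x i - a i⌋, fun i => ?_⟩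
  constructor
  · linarith [Int.floor_le (x i - a i)]
  · linarith [Int.lt_floor_add_one (x i - a i)]

/-- The integrand for a fixed `q`. -/
noncomputable def Gfun (m n : ℕ) (nrm : (Fin n → ℝ) → ℝ) (ϑ w : Fin m → ℝ) (T : ℝ)
    (q : Fin n → ℤ) (uv : (Fin m → Fin n → ℝ) × (Fin m → ℝ)) : ℝ≥0∞ :=
  ∑' p : Fin m → ℤ,
    if ((1 ≤ nrm (fun j => (q j:ℝ)) ∧ nrm (fun j => (q j:ℝ)) < T) ∧
        ∀ i, |(p i:ℝ) + (∑ j, uv.1 i j * (q j:ℝ)) + uv.2 i| <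
          ϑ i * nrm (fun j => (q j:ℝ)) ^ (-(w i)))
    then 1 else 0

lemma card_eq_tsum (m n : ℕ) (nrm : (Fin n → ℝ) → ℝ) (ϑ w : Fin m → ℝ) (T : ℝ)
    (c : ℝ) (hc : 0 < c) (hlow : ∀ x, c * ‖x‖ ≤ nrm x)
    (u : Fin m → Fin n → ℝ) (v : Fin m → ℝ) :
    ((Nat.card ↥(affLattice m n u v ∩ OmegaSet m n nrm ϑ w T)) : ℝ≥0∞)
     = ∑' q : Fin n → ℤ, Gfun m n nrm ϑ w T q (u, v) := by
  show _ = ∑' q : Fin n → ℤ, ∑' p : Fin m → ℤ,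
      if ((1 ≤ nrm (fun j => (q j:ℝ)) ∧ nrm (fun j => (q j:ℝ)) < T) ∧
          ∀ i, |(p i:ℝ) + (∑ j, u i j * (q j:ℝ)) + v i| <
            ϑ i * nrm (fun j => (q j:ℝ)) ^ (-(w i)))
      then 1 else 0
  classical
  set Φ : ((Fin n → ℤ) × (Fin m → ℤ)) → (Fin m → ℝ) × (Fin n → ℝ) := fun qp =>
    (fun i => (qp.2 i : ℝ) + (∑ j, u i j * (qp.1 j : ℝ)) + v i, fun j => (qp.1 j : ℝ)) with hΦ
  set cond : ((Fin n → ℤ) × (Fin m → ℤ)) → Prop := fun qp =>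
    (1 ≤ nrm (fun j => (qp.1 j:ℝ)) ∧ nrm (fun j => (qp.1 j:ℝ)) < T) ∧
      ∀ i, |(qp.2 i:ℝ) + (∑ j, u i j * (qp.1 j:ℝ)) + v i| <
        ϑ i * nrm (fun j => (qp.1 j:ℝ)) ^ (-(w i)) with hcond
  set S : Set ((Fin n → ℤ) × (Fin m → ℤ)) := {qp | cond qp} with hSdef
  have hinj : Function.Injective Φ := by
    rintro ⟨q, p⟩ ⟨q', p'⟩ h
    rw [hΦ] at h
    simp only [Prod.mk.injEq] at h
    have hq : q = q' := by
      funext j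
      have := congrFun h.2 j
      exact_mod_cast this
    subst hq
    have hp : p = p' := by
      funext i
      have := congrFun h.1 i
      have h2 : ((p i : ℝ)) = (p' i : ℝ) := by
        simpa using this
      exact_mod_cast h2
    simp [hp]
  have himage : affLattice m n u v ∩ OmegaSet m n nrm ϑ w T = Φ '' S := by
    ext z
    constructor
    · rintro ⟨⟨p, q, rfl⟩, hΩ⟩
      simp only [OmegaSet, Set.mem_setOf_eq] at hΩ
      exact ⟨(q, p), ⟨⟨hΩ.1, hΩ.2.1⟩, hΩ.2.2⟩, rfl⟩
    · rintro ⟨⟨q, p⟩, hqp, rfl⟩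
      refine ⟨⟨p, q, rfl⟩, ?_⟩
      simp only [OmegaSet, Set.mem_setOf_eq]
      exact ⟨hqp.1.1, hqp.1.2, hqp.2⟩
  have hSfin : S.Finite := by
    have hQfin : {q : Fin n → ℤ | 1 ≤ nrm (fun j => (q j:ℝ)) ∧
        nrm (fun j => (q j:ℝ)) < T}.Finite := by
      apply (pbox_finite (fun _ : Fin n => (0:ℝ)) (fun _ => T / c + 1)).subset
      rintro q ⟨-, hqT⟩
      intro j
      have h1 : |(q j : ℝ)| ≤ ‖(fun j => (q j:ℝ) : Fin n → ℝ)‖ := by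
        have := norm_le_pi_norm (fun j => (q j:ℝ) : Fin n → ℝ) j
        simpa using this
      have h2 : c * ‖(fun j => (q j:ℝ) : Fin n → ℝ)‖ ≤ nrm (fun j => (q j:ℝ)) := hlow _
      have h3 : ‖(fun j => (q j:ℝ) : Fin n → ℝ)‖ < T / c := by
        rw [lt_div_iff₀ hc]
        linarith
      rw [add_zero]
      linarith
    apply Set.Finite.subset (Set.Finite.biUnion hQfin
      (fun q _ => Set.Finite.image (fun p => ((q, p) : (Fin n → ℤ) × (Fin m → ℤ)))
        (pbox_finite (fun i => (∑ j, u i j * (q j:ℝ)) + v i)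
          (fun i => ϑ i * nrm (fun j => (q j:ℝ)) ^ (-(w i))))))
    rintro ⟨q, p⟩ hqp
    simp only [Set.mem_iUnion, Set.mem_image, Set.mem_setOf_eq]
    refine ⟨q, hqp.1, p, fun i => ?_, rfl⟩
    have := hqp.2 i
    rwa [← add_assoc]
  -- reduce to ncard computation
  have hcard : Nat.card ↥(affLattice m n u v ∩ OmegaSet m n nrm ϑ w T)
      = hSfin.toFinset.card := by
    rw [himage, Nat.card_coe_set_eq, Set.ncard_image_of_injective S hinj,
      Set.ncard_eq_toFinset_card S hSfin]
  rw [hcard]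
  have h1 : ∑ qp ∈ hSfin.toFinset, (if cond qp then (1:ℝ≥0∞) else 0)
      = (hSfin.toFinset.card : ℝ≥0∞) := by
    rw [Finset.sum_congr rfl (fun qp hqp => if_pos (by
      have := (Set.Finite.mem_toFinset hSfin).1 hqp
      simpa [hSdef] using this))]
    simp
  have h2 : (∑' qp : (Fin n → ℤ) × (Fin m → ℤ), if cond qp then (1:ℝ≥0∞) else 0)
      = ∑ qp ∈ hSfin.toFinset, (if cond qp then (1:ℝ≥0∞) else 0) := by
    apply tsum_eq_sum
    intro qp hqp
    rw [if_neg]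
    intro hcnd
    exact hqp (by simpa [hSdef, Set.Finite.mem_toFinset] using hcnd)
  rw [← h1, ← h2]
  exact ENNReal.tsum_prod' (f := fun qp => if cond qp then (1:ℝ≥0∞) else 0)

lemma Gmeas (m n : ℕ) (nrm : (Fin n → ℝ) → ℝ) (ϑ w : Fin m → ℝ) (T : ℝ)
    (q : Fin n → ℤ) : Measurable (Gfun m n nrm ϑ w T q) := by
  classical
  apply Measurable.ennreal_tsum
  intro p
  apply Measurable.ite _ measurable_const measurable_const
  by_cases hq : (1 ≤ nrm (fun j => (q j:ℝ)) ∧ nrm (fun j => (q j:ℝ)) < T)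
  · have heq : {uv : (Fin m → Fin n → ℝ) × (Fin m → ℝ) |
        (1 ≤ nrm (fun j => (q j:ℝ)) ∧ nrm (fun j => (q j:ℝ)) < T) ∧
        ∀ i, |(p i:ℝ) + (∑ j, uv.1 i j * (q j:ℝ)) + uv.2 i| <
          ϑ i * nrm (fun j => (q j:ℝ)) ^ (-(w i))}
        = ⋂ i, {uv : (Fin m → Fin n → ℝ) × (Fin m → ℝ) |
            |(p i:ℝ) + (∑ j, uv.1 i j * (q j:ℝ)) + uv.2 i| <
              ϑ i * nrm (fun j => (q j:ℝ)) ^ (-(w i))} := by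
      ext uv
      simp [hq]
    rw [heq]
    apply MeasurableSet.iInter
    intro i
    have hfm : Measurable (fun uv : (Fin m → Fin n → ℝ) × (Fin m → ℝ) =>
        (p i:ℝ) + (∑ j, uv.1 i j * (q j:ℝ)) + uv.2 i) := by
      have h1 : Measurable fun uv : (Fin m → Fin n → ℝ) × (Fin m → ℝ) => uv.2 i :=
        (measurable_pi_apply i).comp measurable_snd
      have h2 : Measurable fun uv : (Fin m → Fin n → ℝ) × (Fin m → ℝ) =>
          (∑ j, uv.1 i j * (q j:ℝ)) := by
        apply Finset.measurable_sum
        intro j _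
        exact ((measurable_pi_apply j).comp ((measurable_pi_apply i).comp
          measurable_fst)).mul_const _
      exact (measurable_const.add h2).add h1
    have heq2 : {uv : (Fin m → Fin n → ℝ) × (Fin m → ℝ) |
        |(p i:ℝ) + (∑ j, uv.1 i j * (q j:ℝ)) + uv.2 i| <
          ϑ i * nrm (fun j => (q j:ℝ)) ^ (-(w i))}
        = (fun uv : (Fin m → Fin n → ℝ) × (Fin m → ℝ) =>
            (p i:ℝ) + (∑ j, uv.1 i j * (q j:ℝ)) + uv.2 i) ⁻¹'
          (Set.Ioo (-(ϑ i * nrm (fun j => (q j:ℝ)) ^ (-(w i))))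
            (ϑ i * nrm (fun j => (q j:ℝ)) ^ (-(w i)))) := by
      ext uv
      simp [abs_lt]
    rw [heq2]
    exact hfm measurableSet_Ioo
  · have heq : {uv : (Fin m → Fin n → ℝ) × (Fin m → ℝ) |
        (1 ≤ nrm (fun j => (q j:ℝ)) ∧ nrm (fun j => (q j:ℝ)) < T) ∧
        ∀ i, |(p i:ℝ) + (∑ j, uv.1 i j * (q j:ℝ)) + uv.2 i| <
          ϑ i * nrm (fun j => (q j:ℝ)) ^ (-(w i))} = ∅ := by
      ext uv
      simp only [Set.mem_setOf_eq, Set.mem_empty_iff_false, iff_false]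
      intro h
      exact hq h.1
    rw [heq]
    exact MeasurableSet.empty

lemma Gzero (m n : ℕ) (nrm : (Fin n → ℝ) → ℝ) (ϑ w : Fin m → ℝ) (T : ℝ)
    (q : Fin n → ℤ) (hq : ¬(1 ≤ nrm (fun j => (q j:ℝ)) ∧ nrm (fun j => (q j:ℝ)) < T))
    (uv : (Fin m → Fin n → ℝ) × (Fin m → ℝ)) : Gfun m n nrm ϑ w T q uv = 0 := by
  unfold Gfun
  rw [ENNReal.tsum_eq_zero]
  intro p
  rw [if_neg]
  intro h
  exact hq h.1

lemma box01_eq (m n : ℕ) : box01 m n =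
    (Set.pi Set.univ fun _ : Fin m => Set.pi Set.univ fun _ : Fin n => Set.Icc (0:ℝ) 1) ×ˢ
    (Set.pi Set.univ fun _ : Fin m => Set.Icc (0:ℝ) 1) := by
  ext uv
  simp only [box01, Set.mem_setOf_eq, Set.mem_prod, Set.mem_pi, Set.mem_univ, forall_true_left]

lemma Icc_ae_Ico (m : ℕ) :
    (Set.pi Set.univ fun _ : Fin m => Set.Icc (0:ℝ) 1) =ᵐ[volume]
    (Set.pi Set.univ fun _ : Fin m => Set.Ico (0:ℝ) 1) := by
  have hsub : (Set.pi Set.univ fun _ : Fin m => Set.Ico (0:ℝ) 1) ⊆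
      (Set.pi Set.univ fun _ : Fin m => Set.Icc (0:ℝ) 1) :=
    Set.pi_mono fun i _ => Set.Ico_subset_Icc_self
  have hIcc : volume (Set.pi Set.univ fun _ : Fin m => Set.Icc (0:ℝ) 1) = 1 := by
    rw [volume_pi_pi]
    simp [Real.volume_Icc]
  have hIco : volume (Set.pi Set.univ fun _ : Fin m => Set.Ico (0:ℝ) 1) = 1 := by
    rw [volume_pi_pi]
    simp [Real.volume_Ico]
  rw [MeasureTheory.ae_eq_set]
  constructor
  · rw [measure_diff hsub
      (MeasurableSet.univ_pi fun i => measurableSet_Ico).nullMeasurableSet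
      (by rw [hIco]; exact one_ne_top)]
    rw [hIcc, hIco, tsub_self]
  · rw [Set.diff_eq_empty.2 hsub]
    exact measure_empty

lemma Gint (m n : ℕ) (nrm : (Fin n → ℝ) → ℝ) (ϑ w : Fin m → ℝ) (T : ℝ)
    (q : Fin n → ℤ) (hq : 1 ≤ nrm (fun j => (q j:ℝ)) ∧ nrm (fun j => (q j:ℝ)) < T) :
    ∫⁻ uv in box01 m n, Gfun m n nrm ϑ w T q uv
      = ∏ i, ENNReal.ofReal (2 * (ϑ i * nrm (fun j => (q j:ℝ)) ^ (-(w i)))) := by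
  classical
  rw [box01_eq, Measure.volume_eq_prod, ← Measure.prod_restrict,
    lintegral_prod _ ((Gmeas m n nrm ϑ w T q).aemeasurable)]
  have hinner : ∀ u : Fin m → Fin n → ℝ,
      ∫⁻ v in (Set.pi Set.univ fun _ : Fin m => Set.Icc (0:ℝ) 1),
        Gfun m n nrm ϑ w T q (u, v)
      = volume (Set.pi Set.univ fun i : Fin m =>
          Set.Ioo (-(ϑ i * nrm (fun j => (q j:ℝ)) ^ (-(w i))))
            (ϑ i * nrm (fun j => (q j:ℝ)) ^ (-(w i)))) := by
    intro u
    rw [Measure.restrict_congr_set (Icc_ae_Ico m)]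
    have hGeq : ∀ v : Fin m → ℝ, Gfun m n nrm ϑ w T q (u, v)
        = ∑' p : Fin m → ℤ,
          Set.indicator (Set.pi Set.univ fun i : Fin m =>
            Set.Ioo (-(ϑ i * nrm (fun j => (q j:ℝ)) ^ (-(w i))))
              (ϑ i * nrm (fun j => (q j:ℝ)) ^ (-(w i)))) 1
          (fun i => (p i : ℝ) + (∑ j, u i j * (q j:ℝ)) + v i) := by
      intro v
      unfold Gfun
      apply tsum_congr
      intro p
      rw [Set.indicator_apply]
      have hmem : ((fun i => (p i : ℝ) + (∑ j, u i j * (q j:ℝ)) + v i) ∈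
          Set.pi Set.univ fun i : Fin m =>
            Set.Ioo (-(ϑ i * nrm (fun j => (q j:ℝ)) ^ (-(w i))))
              (ϑ i * nrm (fun j => (q j:ℝ)) ^ (-(w i))))
          ↔ ∀ i, |(p i:ℝ) + (∑ j, u i j * (q j:ℝ)) + v i| <
              ϑ i * nrm (fun j => (q j:ℝ)) ^ (-(w i)) := by
        simp [Set.mem_pi, abs_lt]
      by_cases h : ∀ i, |(p i:ℝ) + (∑ j, u i j * (q j:ℝ)) + v i| <
          ϑ i * nrm (fun j => (q j:ℝ)) ^ (-(w i))
      · rw [if_pos ⟨hq, h⟩, if_pos (hmem.2 h)]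
        simp
      · rw [if_neg (fun hh => h hh.2), if_neg (fun hh => h (hmem.1 hh))]
    have := lintegral_congr (μ := volume.restrict
      (Set.pi Set.univ fun _ : Fin m => Set.Ico (0:ℝ) 1)) hGeq
    rw [this]
    exact unfold_lemma m _ (MeasurableSet.univ_pi fun i => measurableSet_Ioo) _
  rw [lintegral_congr hinner]
  rw [setLIntegral_const]
  have hA : volume (Set.pi Set.univ fun _ : Fin m =>
      Set.pi Set.univ fun _ : Fin n => Set.Icc (0:ℝ) 1) = 1 := by
    rw [volume_pi_pi]
    have h1 : volume (Set.pi Set.univ fun _ : Fin n => Set.Icc (0:ℝ) 1) = 1 := by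
      rw [volume_pi_pi]
      simp [Real.volume_Icc]
    rw [Finset.prod_congr rfl fun i _ => h1, Finset.prod_const_one]
  rw [hA, mul_one, volume_pi_pi]
  apply Finset.prod_congr rfl
  intro i _
  rw [Real.volume_Ioo]
  congr 1
  ring

end Aux

theorem integral_count_lattice_Omega (m n : ℕ) (hm : 2 ≤ m) (hn : 1 ≤ n)
    (nrm : (Fin n → ℝ) → ℝ)
    (hnrm0 : ∀ x, nrm x = 0 ↔ x = 0)
    (hnrm_smul : ∀ (c : ℝ) x, nrm (c • x) = |c| * nrm x)
    (hnrm_add : ∀ x y, nrm (x + y) ≤ nrm x + nrm y)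
    (ϑ : Fin m → ℝ) (hϑ : ∀ i, 0 < ϑ i)
    (w : Fin m → ℝ) (hw : ∀ i, 0 < w i) (hwsum : ∑ i, w i = (n : ℝ)) :
    ∀ M : ℕ, 1 ≤ M →
      (∫ uv in box01 m n,
        (Nat.card ↥(affLattice m n uv.1 uv.2 ∩
          OmegaSet m n nrm ϑ w (Real.exp M)) : ℝ)) =
      2 ^ m * (∏ i, ϑ i) *
        ∑' q : Fin n → ℤ,
          if 1 ≤ nrm (fun j => (q j : ℝ)) ∧ nrm (fun j => (q j : ℝ)) < Real.exp M then
            nrm (fun j => (q j : ℝ)) ^ (-(n : ℝ)) else 0 := by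
  intro M hM
  classical
  obtain ⟨c, hc, hlow⟩ := nrm_lower n hn nrm hnrm0 hnrm_smul hnrm_add
  have hQfin := qset_finite n nrm (Real.exp M) c hc hlow
  set Qfin := hQfin.toFinset with hQfindef
  have hpt : ∀ uv : (Fin m → Fin n → ℝ) × (Fin m → ℝ),
      ((Nat.card ↥(affLattice m n uv.1 uv.2 ∩ OmegaSet m n nrm ϑ w (Real.exp M))) : ℝ≥0∞)
      = ∑' q : Fin n → ℤ, Gfun m n nrm ϑ w (Real.exp M) q uv := fun uv =>
    card_eq_tsum m n nrm ϑ w (Real.exp M) c hc hlow uv.1 uv.2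
  have hL : Measurable fun uv => ∑' q : Fin n → ℤ, Gfun m n nrm ϑ w (Real.exp M) q uv :=
    Measurable.ennreal_tsum (fun q => Gmeas m n nrm ϑ w (Real.exp M) q)
  have hfin : ∀ uv : (Fin m → Fin n → ℝ) × (Fin m → ℝ),
      (∑' q : Fin n → ℤ, Gfun m n nrm ϑ w (Real.exp M) q uv) < ⊤ := by
    intro uv
    rw [← hpt uv]
    exact ENNReal.natCast_lt_top _
  calc (∫ uv in box01 m n,
        (Nat.card ↥(affLattice m n uv.1 uv.2 ∩
          OmegaSet m n nrm ϑ w (Real.exp M)) : ℝ))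
      = ∫ uv in box01 m n,
        (∑' q : Fin n → ℤ, Gfun m n nrm ϑ w (Real.exp M) q uv).toReal := by
        apply integral_congr_ae
        filter_upwards with uv
        rw [← hpt uv]
        simp
    _ = (∫⁻ uv in box01 m n,
        ∑' q : Fin n → ℤ, Gfun m n nrm ϑ w (Real.exp M) q uv).toReal := by
        rw [integral_toReal (hL.aemeasurable) (ae_of_all _ hfin)]
    _ = (∑' q : Fin n → ℤ, ∫⁻ uv in box01 m n,
          Gfun m n nrm ϑ w (Real.exp M) q uv).toReal := by
        rw [lintegral_tsum (fun q => (Gmeas m n nrm ϑ w (Real.exp M) q).aemeasurable)]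
    _ = (∑ q ∈ Qfin, ∫⁻ uv in box01 m n,
          Gfun m n nrm ϑ w (Real.exp M) q uv).toReal := by
        congr 1
        apply tsum_eq_sum
        intro q hq
        have hq' : ¬(1 ≤ nrm (fun j => (q j:ℝ)) ∧ nrm (fun j => (q j:ℝ)) < Real.exp M) := by
          intro h
          exact hq (by simpa [hQfindef, Set.Finite.mem_toFinset] using h)
        have : ∀ uv : (Fin m → Fin n → ℝ) × (Fin m → ℝ),
            Gfun m n nrm ϑ w (Real.exp M) q uv = 0 :=
          Gzero m n nrm ϑ w (Real.exp M) q hq'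
        simp [this]
    _ = (∑ q ∈ Qfin, ∏ i, ENNReal.ofReal
          (2 * (ϑ i * nrm (fun j => (q j:ℝ)) ^ (-(w i))))).toReal := by
        congr 1
        apply Finset.sum_congr rfl
        intro q hq
        exact Gint m n nrm ϑ w (Real.exp M) q
          (by simpa [hQfindef, Set.Finite.mem_toFinset] using hq)
    _ = ∑ q ∈ Qfin, ∏ i, (2 * (ϑ i * nrm (fun j => (q j:ℝ)) ^ (-(w i)))) := by
        rw [ENNReal.toReal_sum (fun q _ => by
          apply LT.lt.ne
          exact ENNReal.prod_lt_top (fun i _ => ENNReal.ofReal_ne_top.lt_top))]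
        apply Finset.sum_congr rfl
        intro q hq
        rw [ENNReal.toReal_prod]
        apply Finset.prod_congr rfl
        intro i _
        apply ENNReal.toReal_ofReal
        have h1 : (1:ℝ) ≤ nrm (fun j => (q j:ℝ)) :=
          ((Set.Finite.mem_toFinset hQfin).1 (hQfindef ▸ hq)).1
        have h2 : (0:ℝ) < nrm (fun j => (q j:ℝ)) ^ (-(w i)) :=
          Real.rpow_pos_of_pos (by linarith) _
        nlinarith [hϑ i, h2, mul_pos (hϑ i) h2]
    _ = ∑ q ∈ Qfin, 2 ^ m * (∏ i, ϑ i) * nrm (fun j => (q j:ℝ)) ^ (-(n:ℝ)) := by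
        apply Finset.sum_congr rfl
        intro q hq
        have h1 : (1:ℝ) ≤ nrm (fun j => (q j:ℝ)) :=
          ((Set.Finite.mem_toFinset hQfin).1 (hQfindef ▸ hq)).1
        have hpos : (0:ℝ) < nrm (fun j => (q j:ℝ)) := by linarith
        rw [Finset.prod_mul_distrib, Finset.prod_const, Finset.prod_mul_distrib]
        have h2 : ∏ i, nrm (fun j => (q j:ℝ)) ^ (-(w i))
            = nrm (fun j => (q j:ℝ)) ^ (-(n:ℝ)) := by
          rw [← Real.rpow_sum_of_pos hpos]
          congr 1
          have hneg : ∑ x : Fin m, -w x = -∑ x : Fin m, w x := by simp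
          rw [hneg, hwsum]
        rw [h2]
        simp [Finset.card_univ]
        ring
    _ = 2 ^ m * (∏ i, ϑ i) *
        ∑' q : Fin n → ℤ,
          if 1 ≤ nrm (fun j => (q j : ℝ)) ∧ nrm (fun j => (q j : ℝ)) < Real.exp M then
            nrm (fun j => (q j : ℝ)) ^ (-(n : ℝ)) else 0 := by
        rw [tsum_eq_sum (s := Qfin) (by
          intro q hq
          rw [if_neg]
          intro h
          exact hq (by simpa [hQfindef, Set.Finite.mem_toFinset] using h))]
        rw [Finset.mul_sum]
        apply Finset.sum_congr rfl
        intro q hq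
        have hcnd : 1 ≤ nrm (fun j => (q j : ℝ)) ∧ nrm (fun j => (q j : ℝ)) < Real.exp M := by
          simpa using (Set.Finite.mem_toFinset hQfin).1 (hQfindef ▸ hq)
        rw [if_pos hcnd]
end

section
/- Let N ≥ 1 and n ≥ 1 be integers, let w ∈ ℤⁿ be a nonzero integer vector, let c ∈ ℝ, and let h : ℝ → ℝ be a bounded measurable function with compact support. Then Σ_{p ∈ ℤ} ∫_{[0,N]ⁿ} h( N·p + c + ⟨u, w⟩ ) du = N^{n−1} · ∫_ℝ h(t) dt, where ⟨·,·⟩ is the standard inner product on ℝⁿ. -/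
open MeasureTheory Filter Real

section AuxLemmas

lemma pi_restrict_box {n : ℕ} (s : Fin n → Set ℝ) :
    (volume : Measure (Fin n → ℝ)).restrict (Set.univ.pi s)
      = Measure.pi (fun i => (volume : Measure ℝ).restrict (s i)) := by
  refine (Measure.pi_eq (μ := fun i => (volume : Measure ℝ).restrict (s i))
    fun t ht => ?_).symm
  rw [Measure.restrict_apply (MeasurableSet.univ_pi ht), ← Set.pi_inter_distrib,
    volume_pi_pi]
  exact Finset.prod_congr rfl fun i _ => (Measure.restrict_apply (ht i)).symm

variable {h : ℝ → ℝ} {B R Nr : ℝ}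

lemma supp_subset (hR : ∀ y, y ∉ Set.Icc (-R) R → h y = 0)
    (hNr : 0 < Nr) (x : ℝ) :
    (Function.support fun p : ℤ => h (Nr * p + x)) ⊆
      ↑(Finset.Icc ⌈(-R - x) / Nr⌉ ⌊(R - x) / Nr⌋) := by
  intro p hp
  have hy : Nr * p + x ∈ Set.Icc (-R) R := by
    by_contra hc; exact hp (hR _ hc)
  obtain ⟨h1, h2⟩ := hy
  simp only [Finset.coe_Icc, Set.mem_Icc]
  constructor
  · rw [Int.ceil_le, div_le_iff₀ hNr]
    nlinarith
  · rw [Int.le_floor, le_div_iff₀ hNr]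
    nlinarith

lemma H_sum (hR : ∀ y, y ∉ Set.Icc (-R) R → h y = 0) (hNr : 0 < Nr) (x : ℝ) :
    (∑' p : ℤ, h (Nr * p + x))
      = ∑ p ∈ Finset.Icc ⌈(-R - x) / Nr⌉ ⌊(R - x) / Nr⌋, h (Nr * p + x) :=
  tsum_eq_sum fun p hp => by
    by_contra hc
    exact hp (supp_subset hR hNr x hc)

lemma H_bound (hB : ∀ t, |h t| ≤ B) (hR : ∀ y, y ∉ Set.Icc (-R) R → h y = 0)
    (hR0 : 0 ≤ R) (hNr : 1 ≤ Nr) (x : ℝ) :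
    |∑' p : ℤ, h (Nr * p + x)| ≤ (2 * R + 1) * B := by
  have hNr0 : (0:ℝ) < Nr := lt_of_lt_of_le one_pos hNr
  have hB0 : 0 ≤ B := le_trans (abs_nonneg _) (hB 0)
  rw [H_sum hR hNr0 x]
  set S := Finset.Icc ⌈(-R - x) / Nr⌉ ⌊(R - x) / Nr⌋ with hS
  have hcard : (S.card : ℝ) ≤ 2 * R + 1 := by
    rw [hS, Int.card_Icc]
    set z : ℤ := ⌊(R - x) / Nr⌋ + 1 - ⌈(-R - x) / Nr⌉ with hz
    have hfl : ((⌊(R - x) / Nr⌋ : ℤ) : ℝ) ≤ (R - x) / Nr := Int.floor_le _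
    have hce : (-R - x) / Nr ≤ ((⌈(-R - x) / Nr⌉ : ℤ) : ℝ) := Int.le_ceil _
    have hdiff : (R - x) / Nr - (-R - x) / Nr ≤ 2 * R := by
      rw [div_sub_div_same]
      have h2 : (R - x) - (-R - x) = 2 * R := by ring
      rw [h2]
      exact div_le_self (by linarith) hNr
    rcases le_or_gt z 0 with hz0 | hz0
    · rw [Int.toNat_of_nonpos hz0]
      simp; linarith
    · have h1 : ((z.toNat : ℤ) : ℝ) = (z : ℝ) := by
        exact_mod_cast congrArg (fun t : ℤ => (t : ℝ)) (Int.toNat_of_nonneg hz0.le)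
      push_cast at h1 ⊢
      rw [h1]
      push_cast [hz]
      linarith
  calc |∑ p ∈ S, h (Nr * p + x)| ≤ ∑ p ∈ S, |h (Nr * p + x)| :=
        Finset.abs_sum_le_sum_abs _ _
    _ ≤ ∑ _p ∈ S, B := Finset.sum_le_sum fun p _ => hB _
    _ = (S.card : ℝ) * B := by rw [Finset.sum_const, nsmul_eq_mul]
    _ ≤ (2 * R + 1) * B := mul_le_mul_of_nonneg_right hcard hB0

lemma H_meas (hm : Measurable h) (hR : ∀ y, y ∉ Set.Icc (-R) R → h y = 0)
    (hNr : 0 < Nr) :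
    Measurable fun x => ∑' p : ℤ, h (Nr * p + x) := by
  have hmax : ∀ a : ℝ, max a 0 - max (-a) 0 = a := fun a => by
    rcases le_total 0 a with ha | ha
    · rw [max_eq_left ha, max_eq_right (neg_nonpos.mpr ha)]; ring
    · rw [max_eq_right ha, max_eq_left (neg_nonneg.mpr ha)]; ring
  have key : ∀ x : ℝ, (∑' p : ℤ, h (Nr * p + x))
      = (∑' p : ℤ, ENNReal.ofReal (max (h (Nr * p + x)) 0)).toReal
        - (∑' p : ℤ, ENNReal.ofReal (max (-h (Nr * p + x)) 0)).toReal := by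
    intro x
    have hfin := (Finset.finite_toSet _).subset (supp_subset hR hNr x)
    have s1 : Summable fun p : ℤ => max (h (Nr * p + x)) 0 :=
      summable_of_finite_support (hfin.subset (by
        intro p hp
        simp only [Function.mem_support] at hp ⊢
        intro hc; rw [hc] at hp; simp at hp))
    have s2 : Summable fun p : ℤ => max (-h (Nr * p + x)) 0 :=
      summable_of_finite_support (hfin.subset (by
        intro p hp
        simp only [Function.mem_support] at hp ⊢
        intro hc; rw [hc] at hp; simp at hp))
    rw [← ENNReal.ofReal_tsum_of_nonneg (fun p => le_max_right _ _) s1,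
      ← ENNReal.ofReal_tsum_of_nonneg (fun p => le_max_right _ _) s2,
      ENNReal.toReal_ofReal (tsum_nonneg fun p => le_max_right _ _),
      ENNReal.toReal_ofReal (tsum_nonneg fun p => le_max_right _ _),
      ← Summable.tsum_sub s1 s2]
    exact tsum_congr fun p => (hmax _).symm
  rw [funext key]
  apply Measurable.sub
  · refine (Measurable.ennreal_tsum fun p => ?_).ennreal_toReal
    exact ENNReal.measurable_ofReal.comp
      (((hm.comp (measurable_const.add measurable_id)).max measurable_const))
  · refine (Measurable.ennreal_tsum fun p => ?_).ennreal_toReal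
    exact ENNReal.measurable_ofReal.comp
      ((((hm.comp (measurable_const.add measurable_id)).neg).max measurable_const))

lemma H_per (hNr : 0 < Nr) :
    Function.Periodic (fun x => ∑' p : ℤ, h (Nr * p + x)) Nr := by
  intro x
  calc (∑' p : ℤ, h (Nr * p + (x + Nr)))
      = ∑' p : ℤ, h (Nr * ((Equiv.addRight (1:ℤ)) p) + x) := by
        refine tsum_congr fun p => ?_
        simp only [Equiv.coe_addRight]
        push_cast
        ring_nf
    _ = ∑' p : ℤ, h (Nr * p + x) :=
        (Equiv.addRight (1:ℤ)).tsum_eq (fun q : ℤ => h (Nr * q + x))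

lemma bdd_intervalIntegrable {g : ℝ → ℝ} (hg : Measurable g) {C : ℝ}
    (hC : ∀ x, |g x| ≤ C) (a b : ℝ) : IntervalIntegrable g volume a b := by
  rw [intervalIntegrable_iff]
  refine Measure.integrableOn_of_bounded (M := C) ?_ hg.aestronglyMeasurable ?_
  · rw [Set.uIoc]; exact measure_Ioc_lt_top.ne
  · exact ae_of_all _ fun x => by simpa [Real.norm_eq_abs] using hC x

lemma periodic_shift_integral {g : ℝ → ℝ} (hg : Measurable g) {C : ℝ}
    (hC : ∀ x, |g x| ≤ C) {T : ℝ} (hT : 0 < T) (hper : Function.Periodic g T)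
    (k : ℤ) (hk : k ≠ 0) (a : ℝ) :
    ∫ t in (0:ℝ)..T, g (a + t * k) = ∫ t in (0:ℝ)..T, g t := by
  have hint : ∀ t1 t2, IntervalIntegrable g volume t1 t2 := bdd_intervalIntegrable hg hC
  have hk0 : (k:ℝ) ≠ 0 := Int.cast_ne_zero.mpr hk
  have h1 : (∫ t in (0:ℝ)..T, g (a + t * k)) = ∫ t in (0:ℝ)..T, g ((k:ℝ) * t + a) := by
    refine intervalIntegral.integral_congr fun t _ => ?_
    ring_nf
  rw [h1, intervalIntegral.integral_comp_mul_add g hk0 a]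
  have h2 : (k:ℝ) * 0 + a = a := by ring
  have h3 : (k:ℝ) * T + a = a + k • T := by rw [zsmul_eq_mul]; ring
  rw [h2, h3, hper.intervalIntegral_add_zsmul_eq k a hint,
    hper.intervalIntegral_add_eq a 0, zero_add]
  rw [zsmul_eq_mul, smul_eq_mul, ← mul_assoc, inv_mul_cancel₀ hk0, one_mul]

lemma tsum_lintegral_ne_top' {α : Type*} [MeasurableSpace α] {μ : Measure α}
    [IsFiniteMeasure μ] {f : ℤ → α → ℝ} {B : ℝ} (hB : ∀ p x, |f p x| ≤ B)
    (S : Finset ℤ) (hS : ∀ p ∉ S, ∀ᵐ x ∂μ, f p x = 0) :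
    (∑' p : ℤ, ∫⁻ x, ‖f p x‖₊ ∂μ) ≠ ⊤ := by
  have hzero : ∀ p ∉ S, (∫⁻ x, ‖f p x‖₊ ∂μ) = 0 := by
    intro p hp
    have he : (fun x => (‖f p x‖₊ : ENNReal)) =ᵐ[μ] fun _ => 0 :=
      (hS p hp).mono fun x hx => by simp [hx]
    rw [lintegral_congr_ae he, lintegral_zero]
  rw [tsum_eq_sum hzero]
  refine (ENNReal.sum_lt_top.mpr fun p _ => ?_).ne
  calc (∫⁻ x, ‖f p x‖₊ ∂μ) ≤ ∫⁻ _, (‖B‖₊ : ENNReal) ∂μ := by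
        refine lintegral_mono fun x => ?_
        refine ENNReal.coe_le_coe.mpr ?_
        rw [← NNReal.coe_le_coe, coe_nnnorm, coe_nnnorm, Real.norm_eq_abs, Real.norm_eq_abs]
        exact (hB p x).trans (le_abs_self B)
    _ = ‖B‖₊ * μ Set.univ := lintegral_const _
    _ < ⊤ := ENNReal.mul_lt_top ENNReal.coe_lt_top (measure_lt_top μ _)

lemma unfold_integral (hm : Measurable h) (hint : Integrable h)
    (hB : ∀ t, |h t| ≤ B) (hR : ∀ y, y ∉ Set.Icc (-R) R → h y = 0)
    (hNr : 0 < Nr) :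
    (∫ t in Set.Ioc (0:ℝ) Nr, ∑' p : ℤ, h (Nr * p + t)) = ∫ t, h t := by
  haveI : IsFiniteMeasure (volume.restrict (Set.Ioc (0:ℝ) Nr)) :=
    ⟨by rw [Measure.restrict_apply_univ]; exact measure_Ioc_lt_top⟩
  rw [integral_tsum (f := fun (p : ℤ) (t : ℝ) => h (Nr * p + t))
    (fun p => ((hm.comp (measurable_const.add measurable_id)).aestronglyMeasurable))
    (tsum_lintegral_ne_top' (fun p x => hB _)
      (Finset.Icc ⌈(-R - Nr) / Nr⌉ ⌊R / Nr⌋) ?_)]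
  · have hterm : ∀ p : ℤ, (∫ t in Set.Ioc (0:ℝ) Nr, h (Nr * p + t))
        = ∫ t in Set.Ioc ((p : ℤ) • Nr) (((p : ℤ) + 1) • Nr), h t := by
      intro p
      rw [← intervalIntegral.integral_of_le hNr.le,
        intervalIntegral.integral_comp_add_left h (Nr * p),
        ← intervalIntegral.integral_of_le
          (by rw [zsmul_eq_mul, zsmul_eq_mul]; push_cast; nlinarith)]
      congr 1
      · rw [zsmul_eq_mul]; ring
      · rw [zsmul_eq_mul]; push_cast; ring
    rw [tsum_congr hterm]
    have hmeasIoc : ∀ p : ℤ, MeasurableSet (Set.Ioc ((p : ℤ) • Nr) (((p : ℤ) + 1) • Nr)) :=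
      fun p => measurableSet_Ioc
    have hdisj : Pairwise (Function.onFun Disjoint
        fun p : ℤ => Set.Ioc ((p : ℤ) • Nr) (((p : ℤ) + 1) • Nr)) := by
      intro i j hij
      rcases hij.lt_or_gt with hlt | hlt
      · refine Set.Ioc_disjoint_Ioc.mpr ?_
        have hij' : (i + 1 : ℤ) ≤ j := hlt
        calc ((i+1 : ℤ) • Nr) ⊓ ((j+1 : ℤ) • Nr) ≤ (i+1 : ℤ) • Nr := inf_le_left
          _ ≤ (j : ℤ) • Nr := by
              rw [zsmul_eq_mul, zsmul_eq_mul]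
              exact mul_le_mul_of_nonneg_right (by exact_mod_cast hij') hNr.le
          _ ≤ ((i : ℤ) • Nr) ⊔ ((j : ℤ) • Nr) := le_sup_right
      · refine Set.Ioc_disjoint_Ioc.mpr ?_
        have hij' : (j + 1 : ℤ) ≤ i := hlt
        calc ((i+1 : ℤ) • Nr) ⊓ ((j+1 : ℤ) • Nr) ≤ (j+1 : ℤ) • Nr := inf_le_right
          _ ≤ (i : ℤ) • Nr := by
              rw [zsmul_eq_mul, zsmul_eq_mul]
              exact mul_le_mul_of_nonneg_right (by exact_mod_cast hij') hNr.le
          _ ≤ ((i : ℤ) • Nr) ⊔ ((j : ℤ) • Nr) := le_sup_left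
    rw [← integral_iUnion hmeasIoc hdisj (hint.integrableOn)]
    rw [iUnion_Ioc_zsmul hNr]
    exact setIntegral_univ
  · intro p hp
    refine ae_restrict_of_forall_mem measurableSet_Ioc fun t ht => ?_
    by_contra hc
    have hmem : p ∈ Finset.Icc ⌈(-R - Nr) / Nr⌉ ⌊R / Nr⌋ := by
      have h2 := supp_subset hR hNr t hc
      simp only [Finset.coe_Icc, Set.mem_Icc] at h2
      obtain ⟨ha, hb⟩ := h2
      obtain ⟨ht1, ht2⟩ := ht
      simp only [Finset.mem_Icc]
      constructor
      · refine le_trans (Int.ceil_le_ceil ?_) ha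
        rw [div_le_div_iff_of_pos_right hNr]
        linarith
      · refine le_trans hb (Int.floor_le_floor ?_)
        rw [div_le_div_iff_of_pos_right hNr]
        linarith
    exact hp hmem

end AuxLemmas

theorem averaged_lattice_integral (N n : ℕ) (hN : 1 ≤ N) (hn : 1 ≤ n)
    (w : Fin n → ℤ) (hw : w ≠ 0) (c : ℝ)
    (h : ℝ → ℝ) (h_meas : Measurable h) (h_bdd : ∃ B, ∀ t, |h t| ≤ B)
    (h_cpt : HasCompactSupport h) :
    (∑' p : ℤ, ∫ u in {u : Fin n → ℝ | ∀ j, u j ∈ Set.Icc (0 : ℝ) (N : ℝ)},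
        h ((N : ℝ) * p + c + ∑ j, u j * (w j : ℝ))) =
      (N : ℝ) ^ (n - 1) * ∫ t, h t := by
  obtain ⟨m, rfl⟩ : ∃ m, n = m + 1 := ⟨n - 1, (Nat.succ_pred_eq_of_pos hn).symm⟩
  have hNpos : (0:ℝ) < (N:ℝ) := by exact_mod_cast Nat.lt_of_lt_of_le Nat.zero_lt_one hN
  have hN1 : (1:ℝ) ≤ (N:ℝ) := by exact_mod_cast hN
  obtain ⟨B, hB⟩ := h_bdd
  have hB0 : (0:ℝ) ≤ B := le_trans (abs_nonneg _) (hB 0)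
  -- support radius
  obtain ⟨r, hr⟩ := h_cpt.isBounded.subset_closedBall 0
  set R : ℝ := max r 0 with hRdef
  have hR0 : 0 ≤ R := le_max_right _ _
  have hR : ∀ y, y ∉ Set.Icc (-R) R → h y = 0 := by
    intro y hy
    apply image_eq_zero_of_notMem_tsupport
    intro hmem
    apply hy
    have hd := hr hmem
    rw [Metric.mem_closedBall, Real.dist_eq, sub_zero] at hd
    exact Set.mem_Icc.mpr (abs_le.mp (hd.trans (le_max_left r 0)))
  -- integrability of h
  have h_int : Integrable h := by
    have hio : IntegrableOn h (Set.Icc (-R) R) :=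
      Measure.integrableOn_of_bounded (M := B) measure_Icc_lt_top.ne
        h_meas.aestronglyMeasurable
        (ae_of_all _ fun x => by simpa [Real.norm_eq_abs] using hB x)
    exact hio.integrable_of_forall_notMem_eq_zero fun x hx => hR x hx
  -- the box
  set box : Set (Fin (m+1) → ℝ) := {u | ∀ j, u j ∈ Set.Icc (0:ℝ) (N:ℝ)} with hboxdef
  have hbox_eq : box = Set.univ.pi (fun _ => Set.Icc (0:ℝ) (N:ℝ)) := by
    ext u; simp only [hboxdef, Set.mem_setOf_eq, Set.mem_univ_pi]
  have hbox_meas : MeasurableSet box := by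
    rw [hbox_eq]; exact MeasurableSet.univ_pi (fun _ => measurableSet_Icc)
  haveI hfinbox : IsFiniteMeasure (volume.restrict box) := by
    constructor
    rw [Measure.restrict_apply_univ, hbox_eq, volume_pi_pi]
    refine ENNReal.prod_lt_top fun i _ => ?_
    rw [Real.volume_Icc]
    exact ENNReal.ofReal_lt_top
  -- nonzero coordinate
  obtain ⟨i₀, hi₀⟩ := Function.ne_iff.mp hw
  rw [Pi.zero_apply] at hi₀
  -- bound on the inner product over the box
  set M : ℝ := (N:ℝ) * ∑ j, |(w j : ℝ)| with hMdef
  have hM : ∀ u ∈ box, |∑ j, u j * (w j : ℝ)| ≤ M := by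
    intro u hu
    calc |∑ j, u j * (w j:ℝ)| ≤ ∑ j, |u j * (w j:ℝ)| := Finset.abs_sum_le_sum_abs _ _
      _ ≤ ∑ j, (N:ℝ) * |(w j:ℝ)| := by
          refine Finset.sum_le_sum fun j _ => ?_
          rw [abs_mul]
          refine mul_le_mul_of_nonneg_right ?_ (abs_nonneg _)
          obtain ⟨h1, h2⟩ := hu j
          rw [abs_le]; exact ⟨by linarith, h2⟩
      _ = M := by rw [hMdef, Finset.mul_sum]
  set S₀ : Finset ℤ := Finset.Icc ⌈(-R - c - M)/(N:ℝ)⌉ ⌊(R - c + M)/(N:ℝ)⌋ with hS₀def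
  have hS₀ : ∀ p ∉ S₀, ∀ u ∈ box, h ((N:ℝ)*p + c + ∑ j, u j * (w j:ℝ)) = 0 := by
    intro p hp u hu
    by_contra hc
    apply hp
    have hy : (N:ℝ)*p + c + ∑ j, u j * (w j:ℝ) ∈ Set.Icc (-R) R := by
      by_contra hc2; exact hc (hR _ hc2)
    obtain ⟨h1, h2⟩ := hy
    have hMu := abs_le.mp (hM u hu)
    simp only [hS₀def, Finset.mem_Icc]
    constructor
    · rw [Int.ceil_le, div_le_iff₀ hNpos]; nlinarith [hMu.1, hMu.2]
    · rw [Int.le_floor, le_div_iff₀ hNpos]; nlinarith [hMu.1, hMu.2]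
  have hlin : Measurable fun u : Fin (m+1) → ℝ => ∑ j, u j * (w j : ℝ) :=
    Finset.measurable_sum _ fun j _ => (measurable_pi_apply j).mul_const _
  -- Step 1: swap the sum and the integral
  have step1 : (∑' p : ℤ, ∫ u in box, h ((N:ℝ)*p + c + ∑ j, u j * (w j:ℝ)))
      = ∫ u in box, ∑' p : ℤ, h ((N:ℝ)*p + c + ∑ j, u j * (w j:ℝ)) := by
    refine (integral_tsum
      (f := fun (p : ℤ) (u : Fin (m+1) → ℝ) => h ((N:ℝ)*p + c + ∑ j, u j * (w j:ℝ)))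
      (fun p => ?_) ?_).symm
    · exact (h_meas.comp (measurable_const.add hlin)).aestronglyMeasurable
    · refine tsum_lintegral_ne_top' (B := B) (fun p u => hB _) S₀ (fun p hp => ?_)
      exact ae_restrict_of_forall_mem hbox_meas (fun u hu => hS₀ p hp u hu)
  -- the periodization H
  set H : ℝ → ℝ := fun x => ∑' p : ℤ, h ((N:ℝ)*p + x) with hHdef
  have hH_meas : Measurable H := H_meas h_meas hR hNpos
  have hH_bound : ∀ x, |H x| ≤ (2*R+1)*B := fun x => H_bound hB hR hR0 hN1 x
  have hH_per : Function.Periodic H (N:ℝ) := H_per hNpos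
  have hHcomp : ∀ u : Fin (m+1) → ℝ,
      (∑' p : ℤ, h ((N:ℝ)*p + c + ∑ j, u j * (w j:ℝ)))
        = H (c + ∑ j, u j * (w j:ℝ)) :=
    fun u => tsum_congr fun p => by rw [add_assoc]
  -- Step 2 : Fubini
  set ν : Measure ℝ := volume.restrict (Set.Icc (0:ℝ) (N:ℝ)) with hνdef
  haveI : IsFiniteMeasure ν :=
    ⟨by rw [hνdef, Measure.restrict_apply_univ]; exact measure_Icc_lt_top⟩
  have hrestrict : volume.restrict box = Measure.pi (fun _ : Fin (m+1) => ν) := by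
    rw [hbox_eq]; exact pi_restrict_box _
  set e := MeasurableEquiv.piFinSuccAbove (fun _ : Fin (m+1) => ℝ) i₀ with hedef
  have hmp : MeasurePreserving e (Measure.pi fun _ => ν)
      (ν.prod (Measure.pi fun _ : Fin m => ν)) :=
    measurePreserving_piFinSuccAbove (fun _ => ν) i₀
  set F : (Fin (m+1) → ℝ) → ℝ := fun u => H (c + ∑ j, u j * (w j:ℝ)) with hFdef
  have hF_meas : Measurable F := hH_meas.comp (measurable_const.add hlin)
  have hG_int : Integrable (fun z : ℝ × (Fin m → ℝ) => F (e.symm z))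
      (ν.prod (Measure.pi fun _ : Fin m => ν)) := by
    refine ⟨(hF_meas.comp e.symm.measurable).aestronglyMeasurable,
      HasFiniteIntegral.of_bounded (C := (2*R+1)*B) (ae_of_all _ fun z => ?_)⟩
    simpa [Real.norm_eq_abs, hFdef] using hH_bound (c + ∑ j, (e.symm z) j * (w j:ℝ))
  have step2 : (∫ u in box, F u)
      = ∫ z, F (e.symm z) ∂(ν.prod (Measure.pi fun _ : Fin m => ν)) := by
    rw [hrestrict]
    exact ((MeasurePreserving.symm e hmp).integral_comp e.symm.measurableEmbedding F).symm
  have step3 : (∫ z, F (e.symm z) ∂(ν.prod (Measure.pi fun _ : Fin m => ν)))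
      = ∫ y, (∫ t, F (e.symm (t, y)) ∂ν) ∂(Measure.pi fun _ : Fin m => ν) :=
    integral_prod_symm _ hG_int
  have hesymm : ∀ (t : ℝ) (y : Fin m → ℝ), F (e.symm (t, y))
      = H ((c + ∑ j, y j * (w (i₀.succAbove j) : ℝ)) + t * (w i₀ : ℝ)) := by
    intro t y
    have h1 : (e.symm (t, y)) = Fin.insertNth (α := fun _ => ℝ) i₀ t y := rfl
    rw [hFdef]
    simp only [h1]
    congr 1
    rw [Fin.sum_univ_succAbove
      (fun j => Fin.insertNth (α := fun _ => ℝ) i₀ t y j * (w j : ℝ)) i₀]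
    rw [Fin.insertNth_apply_same]
    simp only [Fin.insertNth_apply_succAbove]
    ring
  have hinner : ∀ y : Fin m → ℝ,
      (∫ t, F (e.symm (t, y)) ∂ν) = ∫ t in (0:ℝ)..(N:ℝ), H t := by
    intro y
    have hIcc : (∫ t, F (e.symm (t, y)) ∂ν)
        = ∫ t in (0:ℝ)..(N:ℝ),
            H ((c + ∑ j, y j * (w (i₀.succAbove j) : ℝ)) + t * (w i₀ : ℝ)) := by
      rw [hνdef]
      simp_rw [hesymm]
      rw [integral_Icc_eq_integral_Ioc, ← intervalIntegral.integral_of_le hNpos.le]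
    rw [hIcc]
    exact periodic_shift_integral hH_meas hH_bound hNpos hH_per (w i₀) hi₀ _
  -- assemble
  rw [step1]
  have hcongr : (∫ u in box, ∑' p : ℤ, h ((N:ℝ)*p + c + ∑ j, u j * (w j:ℝ)))
      = ∫ u in box, F u :=
    integral_congr_ae (ae_of_all _ fun u => hHcomp u)
  rw [hcongr, step2, step3]
  have houter : (∫ y, (∫ t, F (e.symm (t, y)) ∂ν) ∂(Measure.pi fun _ : Fin m => ν))
      = ∫ _, (∫ t in (0:ℝ)..(N:ℝ), H t) ∂(Measure.pi fun _ : Fin m => ν) :=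
    integral_congr_ae (ae_of_all _ fun y => hinner y)
  rw [houter, integral_const]
  have hμuniv : ((Measure.pi fun _ : Fin m => ν) Set.univ).toReal = (N:ℝ)^m := by
    rw [Measure.pi_univ]
    simp only [hνdef, Measure.restrict_apply_univ, Real.volume_Icc, sub_zero,
      Finset.prod_const, Finset.card_univ, Fintype.card_fin]
    rw [← ENNReal.ofReal_pow hNpos.le, ENNReal.toReal_ofReal (by positivity)]
  rw [measureReal_def, hμuniv, smul_eq_mul]
  have hHint : (∫ t in (0:ℝ)..(N:ℝ), H t) = ∫ t, h t := by
    rw [intervalIntegral.integral_of_le hNpos.le]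
    exact unfold_integral h_meas h_int hB hR hNpos
  rw [hHint]
  norm_num
end
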